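/- arXiv:1502.03195 — 12 statements merged into one kernel-verified Lean document; each statement's English description precedes it below -/
import Mathlib

section
/- Let A be a finite alphabet, G a group, H a finite-index subgroup, T a finite subset with HT = G, and E = H ∩ TT⁻¹. Define the higher block shift I ⊂ B^H (where B = A^T) as the set of z ∈ B^H such that for every k ∈ H, every h ∈ E, and every t ∈ T with h⁻¹t ∈ T, one has (k⁻¹·z)(1)(t) = (k⁻¹·z)(h)(h⁻¹t) — equivalently z(k)(t) = z(kh)(h⁻¹t). Then the higher block map ψ : A^G → B^H, ψ(x)(h)(t) = x(ht), is a bijection from A^G onto I. -/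
/-- The left shift action of a group `G` on configurations `G → A`:
`(g • x)(k) = x (g⁻¹ * k)`. -/
def shiftAct {G A : Type*} [Group G] (g : G) (x : G → A) : G → A :=
  fun k => x (g⁻¹ * k)

/-- A pattern: a function from a finite subset of `G` to the alphabet `A`. -/
structure Pattern (G A : Type*) where
  supp : Finset G
  val : supp → A

/-- A pattern `p` appears in a configuration `x` if some shift of `x` restricts to `p`. -/
def Pattern.appears {G A : Type*} [Group G] (p : Pattern G A) (x : G → A) : Prop :=
  ∃ g : G, ∀ w : p.supp, shiftAct g x w = p.val w

/-- The shift space defined by a set of forbidden patterns. -/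
def avoids {G A : Type*} [Group G] (P : Set (Pattern G A)) : Set (G → A) :=
  {x | ∀ p ∈ P, ¬ p.appears x}

/-- A subset of `A^G` is a shift of finite type if it is defined by a finite set
of forbidden patterns. -/
def IsSFT {G A : Type*} [Group G] (S : Set (G → A)) : Prop :=
  ∃ P : Set (Pattern G A), P.Finite ∧ S = avoids P

/-- The stabilizer of a configuration under the shift action, as a subgroup. -/
def stab {G A : Type*} [Group G] (x : G → A) : Subgroup G where
  carrier := {g | shiftAct g x = x}
  one_mem' := by
    funext k
    simp [shiftAct]
  mul_mem' := by
    intro a b ha hb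
    simp only [Set.mem_setOf_eq] at ha hb ⊢
    funext k
    have h1 : x (b⁻¹ * (a⁻¹ * k)) = x (a⁻¹ * k) := congrFun hb (a⁻¹ * k)
    have h2 : x (a⁻¹ * k) = x k := congrFun ha k
    show x ((a * b)⁻¹ * k) = x k
    rw [mul_inv_rev, mul_assoc]
    exact h1.trans h2
  inv_mem' := by
    intro a ha
    simp only [Set.mem_setOf_eq] at ha ⊢
    funext k
    have := congrFun ha (a * k)
    simp only [shiftAct, inv_mul_cancel_left] at this
    show x (a⁻¹⁻¹ * k) = x k
    rw [inv_inv]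
    exact this.symm

/-- A group is weakly periodic if every nonempty SFT over it contains a configuration
with nontrivial stabilizer. -/
def WeaklyPeriodic (G : Type*) [Group G] : Prop :=
  ∀ (A : Type) [Fintype A] (P : Set (Pattern G A)), P.Finite →
    (avoids P).Nonempty → ∃ x ∈ avoids P, ∃ g : G, g ≠ 1 ∧ shiftAct g x = x

/-- A group is strongly periodic if every nonempty SFT over it contains a configuration
whose stabilizer has finite index. -/
def StronglyPeriodic (G : Type*) [Group G] : Prop :=
  ∀ (A : Type) [Fintype A] (P : Set (Pattern G A)), P.Finite →
    (avoids P).Nonempty → ∃ x ∈ avoids P, (stab x).FiniteIndex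

/-- The higher block map is a bijection from `A^G` onto the higher
block shift `I ⊆ B^H`, the set of configurations satisfying the overlap conditions
`z(k)(t) = z(k*h)(h⁻¹*t)` whenever `h ∈ H`, `t, h⁻¹t ∈ T`. -/
theorem higher_block_bijection {G A : Type*} [Group G] [Finite A]
    (H : Subgroup G) [H.FiniteIndex] (T : Finset G)
    (hT : ∀ g : G, ∃ h ∈ H, ∃ t ∈ T, g = h * t) :
    Set.BijOn (fun (x : G → A) => fun (h : H) (t : T) => x ((h : G) * (t : G)))
      Set.univ
      {z : H → (T → A) | ∀ (k h : H) (t t' : T), (h : G) * (t' : G) = (t : G) →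
        z k t = z (k * h) t'} := by
  refine ⟨?_, ?_, ?_⟩
  · intro x _ k h t t' hht
    show x ((k : G) * t) = x (((k * h : H) : G) * t')
    push_cast
    rw [mul_assoc, hht]
  · intro x _ y _ hxy
    funext g
    obtain ⟨h, hh, t, ht, rfl⟩ := hT g
    exact congrFun (congrFun hxy ⟨h, hh⟩) ⟨t, ht⟩
  · intro z hz
    choose f hfH u huT heq using hT
    refine ⟨fun g => z ⟨f g, hfH g⟩ ⟨u g, huT g⟩, trivial, ?_⟩
    have key : ∀ (h : H) (t : T), z ⟨f ((h : G) * t), hfH _⟩ ⟨u ((h : G) * t), huT _⟩ = z h t := by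
      intro h t
      set g := (h : G) * t with hg
      have hmem : (h : G)⁻¹ * f g ∈ H := H.mul_mem (H.inv_mem h.2) (hfH g)
      have hprod : ((⟨(h : G)⁻¹ * f g, hmem⟩ : H) : G) * (u g : G) = (t : G) := by
        show (h : G)⁻¹ * f g * u g = t
        rw [mul_assoc, ← heq g, hg, inv_mul_cancel_left]
      have := hz h ⟨(h : G)⁻¹ * f g, hmem⟩ t ⟨u g, huT g⟩ hprod
      rw [this]
      congr 1
      ext
      push_cast
      simp [mul_inv_cancel_left]
    funext h t
    exact key h t
end

section
/- Let A be a finite alphabet, G a group, and N a finitely generated normal subgroup of G. Then Fix(N) = {x ∈ A^G : n·x = x for all n ∈ N} is a shift of finite type over G. Specifically, if Λ is a finite symmetric generating set of N, then Fix(N) is the SFT defined by the forbidden patterns {p : {1, a} → A : a ∈ Λ, p(a) ≠ p(1)}. -/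

lemma pattern_fixed_supp_finite {G A : Type*} [Group G] [Finite A] (s : Finset G) :
    {p : Pattern G A | p.supp = s}.Finite := by
  rw [← Set.finite_coe_iff]
  refine Finite.of_injective
    (fun p : {p : Pattern G A | p.supp = s} => fun w : s => p.1.val ⟨w.1, by rw [p.2]; exact w.2⟩) ?_
  rintro ⟨⟨s1, v1⟩, h1⟩ ⟨⟨s2, v2⟩, h2⟩ h
  simp only [Set.mem_setOf_eq] at h1 h2
  subst h1
  subst h2
  simp only [Subtype.mk.injEq, Pattern.mk.injEq, heq_eq_eq, true_and]
  funext w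
  exact congrFun h w

/-- For a finitely generated normal subgroup `N` of `G` with finite
symmetric generating set `Λ`, the set `Fix(N)` of configurations fixed by every
element of `N` is the SFT defined by the forbidden patterns
`{p : {1,a} → A : a ∈ Λ, p(a) ≠ p(1)}`; in particular it is a shift of finite type. -/
theorem fix_of_fg_normal_is_SFT {G A : Type*} [Group G] [DecidableEq G] [Finite A]
    (N : Subgroup G) [N.Normal] (Λ : Finset G)
    (hsym : ∀ a ∈ Λ, a⁻¹ ∈ Λ) (hgen : Subgroup.closure (Λ : Set G) = N) :
    ({p : Pattern G A | ∃ a ∈ Λ, ∃ h1 : (1 : G) ∈ p.supp, ∃ ha : a ∈ p.supp,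
        p.supp = {1, a} ∧ p.val ⟨a, ha⟩ ≠ p.val ⟨1, h1⟩}).Finite ∧
    {x : G → A | ∀ n ∈ N, shiftAct n x = x} =
      avoids {p : Pattern G A | ∃ a ∈ Λ, ∃ h1 : (1 : G) ∈ p.supp, ∃ ha : a ∈ p.supp,
        p.supp = {1, a} ∧ p.val ⟨a, ha⟩ ≠ p.val ⟨1, h1⟩} := by
  constructor
  · have hsub : {p : Pattern G A | ∃ a ∈ Λ, ∃ h1 : (1 : G) ∈ p.supp, ∃ ha : a ∈ p.supp,
        p.supp = {1, a} ∧ p.val ⟨a, ha⟩ ≠ p.val ⟨1, h1⟩} ⊆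
        ⋃ a ∈ (Λ : Set G), {p : Pattern G A | p.supp = {1, a}} := by
      rintro p ⟨a, haΛ, h1, ha, hsupp, -⟩
      exact Set.mem_biUnion haΛ hsupp
    exact Set.Finite.subset (Set.Finite.biUnion Λ.finite_toSet
      (fun a _ => pattern_fixed_supp_finite _)) hsub
  · ext x
    simp only [Set.mem_setOf_eq, avoids]
    constructor
    · rintro hx p ⟨a, haΛ, h1, ha, hsupp, hne⟩ ⟨g, hg⟩
      apply hne
      rw [← hg ⟨a, ha⟩, ← hg ⟨1, h1⟩]
      show x (g⁻¹ * a) = x (g⁻¹ * 1)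
      have haN : a ∈ N := hgen ▸ Subgroup.subset_closure haΛ
      have hc : g⁻¹ * a⁻¹ * (g⁻¹)⁻¹ ∈ N :=
        Subgroup.Normal.conj_mem ‹N.Normal› a⁻¹ (inv_mem haN) g⁻¹
      have := congrFun (hx _ hc) g⁻¹
      simp only [shiftAct, mul_inv_rev, inv_inv] at this
      rw [mul_one, ← this]
      congr 1
      group
    · intro hx n hn
      have key : ∀ a ∈ Λ, ∀ k : G, x (k * a) = x k := by
        intro a haΛ k
        by_contra hne
        refine hx ⟨{1, a}, fun w => x (k * w.1)⟩
          ⟨a, haΛ, by simp, by simp, rfl, by simpa using hne⟩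
          ⟨k⁻¹, fun w => ?_⟩
        simp [shiftAct]
      let H : Subgroup G :=
        { carrier := {h | ∀ k : G, x (k * h) = x k}
          one_mem' := by intro k; simp
          mul_mem' := by
            intro a b ha hb k
            rw [← mul_assoc, hb, ha]
          inv_mem' := by
            intro a ha k
            have := ha (k * a⁻¹)
            rw [mul_assoc, inv_mul_cancel, mul_one] at this
            exact this.symm }
      have hNH : N ≤ H := by
        rw [← hgen]
        exact (Subgroup.closure_le H).mpr (fun a haΛ k => key a haΛ k)
      funext k
      have hc : k⁻¹ * n⁻¹ * (k⁻¹)⁻¹ ∈ N :=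
        Subgroup.Normal.conj_mem ‹N.Normal› n⁻¹ (inv_mem hn) k⁻¹
      have := hNH hc k
      show x (n⁻¹ * k) = x k
      rw [← this]
      congr 1
      group
end

section
/- Let G be a group and N a finitely generated normal subgroup of finite index, with T a complete set of distinct left coset representatives for N in G containing 1. Define the N-locked shift L ⊂ T^G as the intersection of Fix(N) = {x ∈ T^G : n·x = x for all n ∈ N} with the SFT S defined by forbidden patterns {p : {1, t} → T : t ∈ T, t ≠ 1, p(1) = p(t)}. Then L is nonempty; in particular, the configuration y ∈ T^G defined by y(tn) = t for t ∈ T, n ∈ N belongs to L. -/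
/-- The `N`-locked shift `L = Fix(N) ∩ S` is nonempty: the configuration
`y` sending each `t*n` (for `t ∈ T`, `n ∈ N`) to `t` belongs to `L`. Here `N` is a
finitely generated normal subgroup of finite index and `T` a complete set of left
coset representatives with `1 ∈ T`. -/
theorem locked_shift_nonempty {G : Type*} [Group G] [DecidableEq G]
    (N : Subgroup G) [N.Normal] [N.FiniteIndex] (hfg : N.FG)
    (T : Finset G) (h1T : (1 : G) ∈ T)
    (hT : ∀ g : G, ∃! t : T, ((t : G))⁻¹ * g ∈ N)
    (L : Set (G → T))
    (hL : L = {x : G → T | ∀ n ∈ N, shiftAct n x = x} ∩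
      avoids {p : Pattern G T | ∃ t ∈ T, t ≠ 1 ∧ ∃ h1 : (1 : G) ∈ p.supp,
        ∃ ht : t ∈ p.supp, p.supp = {1, t} ∧ p.val ⟨1, h1⟩ = p.val ⟨t, ht⟩})
    (y : G → T) (hy : ∀ (t : T) (n : G), n ∈ N → y ((t : G) * n) = t) :
    y ∈ L ∧ L.Nonempty := by
  have key : ∀ (g : G) (t : T), ((t : G))⁻¹ * g ∈ N → y g = t := by
    intro g t h
    have hg : (t : G) * ((t : G)⁻¹ * g) = g := by group
    rw [← hg]; exact hy t _ h
  have mem : ∀ g : G, ((y g : G))⁻¹ * g ∈ N := by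
    intro g
    obtain ⟨t, ht, -⟩ := hT g
    rw [key g t ht]; exact ht
  have hyL : y ∈ L := by
    rw [hL]
    constructor
    · intro n hn
      funext k
      show y (n⁻¹ * k) = y k
      apply key
      have h1 : ((y k : G))⁻¹ * k ∈ N := mem k
      have h2 := Subgroup.Normal.conj_mem ‹N.Normal› _ (N.inv_mem hn) ((y k : G))⁻¹
      have h3 := N.mul_mem h2 h1
      convert h3 using 1; group
    · rintro p ⟨t, htT, htne, h1, ht, hsupp, hval⟩ ⟨g, hg⟩
      have e1 := hg ⟨1, h1⟩
      have e2 := hg ⟨t, ht⟩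
      simp only [shiftAct] at e1 e2
      rw [hval] at e1
      have hs : y (g⁻¹ * 1) = y (g⁻¹ * t) := e1.trans e2.symm
      have hm1 : ((y (g⁻¹ * 1) : G))⁻¹ * (g⁻¹ * 1) ∈ N := mem _
      have hm2 : ((y (g⁻¹ * t) : G))⁻¹ * (g⁻¹ * t) ∈ N := mem _
      rw [← hs] at hm2
      have htN : t ∈ N := by
        have h4 := N.mul_mem (N.inv_mem hm1) hm2
        convert h4 using 1; group
      obtain ⟨s, -, huniq⟩ := hT 1
      have ha := huniq ⟨t, htT⟩ (by simpa using N.inv_mem htN)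
      have hb := huniq ⟨1, h1T⟩ (by simpa using N.one_mem)
      have hc : (⟨t, htT⟩ : T) = ⟨1, h1T⟩ := ha.trans hb.symm
      exact htne (congrArg Subtype.val hc)
  exact ⟨hyL, ⟨y, hyL⟩⟩
end

section
/- Let G be a group, N a finitely generated normal subgroup of finite index, T a complete set of left coset representatives for N in G with 1 ∈ T, and L ⊂ T^G the N-locked shift. Then for every x ∈ L and g ∈ G, g·x = x if and only if g ∈ N; i.e., St_G(x) = N for all x ∈ L. -/
/-- Every configuration in the `N`-locked shift `L` has stabilizer
exactly `N`: for `x ∈ L` and `g ∈ G`, `g·x = x` iff `g ∈ N`. -/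
theorem locked_shift_stabilizer {G : Type*} [Group G] [DecidableEq G]
    (N : Subgroup G) [N.Normal] [N.FiniteIndex] (hfg : N.FG)
    (T : Finset G) (h1T : (1 : G) ∈ T)
    (hT : ∀ g : G, ∃! t : T, ((t : G))⁻¹ * g ∈ N)
    (L : Set (G → T))
    (hL : L = {x : G → T | ∀ n ∈ N, shiftAct n x = x} ∩
      avoids {p : Pattern G T | ∃ t ∈ T, t ≠ 1 ∧ ∃ h1 : (1 : G) ∈ p.supp,
        ∃ ht : t ∈ p.supp, p.supp = {1, t} ∧ p.val ⟨1, h1⟩ = p.val ⟨t, ht⟩}) :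
    ∀ x ∈ L, ∀ g : G, shiftAct g x = x ↔ g ∈ N := by
  intro x hx g
  rw [hL] at hx
  obtain ⟨hfix, havoid⟩ := hx
  constructor
  · intro hg
    obtain ⟨t, ht, -⟩ := hT g
    have hcomp : ∀ (a b : G), shiftAct (a * b) x = shiftAct a (shiftAct b x) := by
      intro a b; funext k; simp [shiftAct, mul_assoc]
    have h1 : shiftAct ((t : G)) x = x := by
      have heq : (g * ((t : G)⁻¹ * g)⁻¹) = (t : G) := by group
      calc shiftAct ((t : G)) x = shiftAct (g * ((t : G)⁻¹ * g)⁻¹) x := by rw [heq]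
        _ = shiftAct g (shiftAct (((t : G)⁻¹ * g)⁻¹) x) := hcomp _ _
        _ = shiftAct g x := by rw [hfix _ (N.inv_mem ht)]
        _ = x := hg
    by_cases hne : (t : G) = 1
    · rw [hne] at ht; simpa using ht
    · exfalso
      have hval : x 1 = x (t : G) := by
        have := congrFun h1 (t : G)
        simpa [shiftAct] using this
      have h1mem : (1 : G) ∈ ({1, (t : G)} : Finset G) := by simp
      have htmem : (t : G) ∈ ({1, (t : G)} : Finset G) := by simp
      refine havoid ⟨{1, (t : G)}, fun w => x w⟩ ?_ ?_
      · exact ⟨(t : G), t.2, hne, h1mem, htmem, rfl, hval⟩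
      · exact ⟨1, fun w => by simp [shiftAct]⟩
  · intro hg
    exact hfix g hg
end

section
/- Let G be a group with a finite-index subgroup H that is weakly periodic. Then G is weakly periodic: every nonempty shift of finite type over G (on any finite alphabet) contains a configuration x with nontrivial stabilizer St_G(x). -/
namespace WPaux

variable {G : Type*} [Group G] (H : Subgroup G) {A : Type*} {C : Type}
variable (e : ((G ⧸ H) → A) ≃ C) [DecidableEq G]

/-- right-coset class of `k`, encoded as the left coset of `k⁻¹`. -/
def qr (k : G) : G ⧸ H := QuotientGroup.mk k⁻¹

noncomputable def hpart (k : G) : G := k * (qr H k).out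

lemma hpart_mem (k : G) : hpart H k ∈ H := by
  have h : (QuotientGroup.mk ((qr H k).out) : G ⧸ H) = QuotientGroup.mk k⁻¹ :=
    Quotient.out_eq _
  rw [QuotientGroup.eq] at h
  have := H.inv_mem h
  simpa [mul_inv_rev, hpart] using this

lemma qr_smul (η : H) (k : G) : qr H ((η : G) * k) = qr H k := by
  unfold qr
  rw [mul_inv_rev, QuotientGroup.eq]
  simpa using η.2

lemma hpart_smul (η : H) (k : G) : hpart H ((η : G) * k) = (η : G) * hpart H k := by
  unfold hpart
  rw [qr_smul, mul_assoc]

noncomputable def hpartH (k : G) : H := ⟨hpart H k, hpart_mem H k⟩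

/-- Encode a `G`-configuration as an `H`-configuration over alphabet `C`. -/
noncomputable def Φ (x : G → A) : H → C :=
  fun η => e (fun q => x ((η : G) * q.out⁻¹))

/-- Decode. -/
noncomputable def Ψ (y : H → C) : G → A :=
  fun k => e.symm (y (hpartH H k)) (qr H k)

lemma Ψ_Φ (x : G → A) : Ψ H e (Φ H e x) = x := by
  funext k
  simp only [Ψ, Φ, hpartH, Equiv.symm_apply_apply]
  congr 1
  simp [hpart, mul_assoc]

lemma qr_out_inv (q : G ⧸ H) : qr H (q.out⁻¹) = q := by
  simp [qr]

lemma Φ_Ψ (y : H → C) : Φ H e (Ψ H e y) = y := by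
  funext η
  simp only [Φ, Ψ]
  have h1 : ∀ q : G ⧸ H, qr H ((η : G) * q.out⁻¹) = q := by
    intro q; rw [qr_smul H η, qr_out_inv]
  have h2 : ∀ q : G ⧸ H, hpartH H ((η : G) * q.out⁻¹) = η := by
    intro q
    apply Subtype.ext
    show hpart H ((η : G) * q.out⁻¹) = (η : G)
    rw [hpart_smul]
    have : hpart H (q.out⁻¹) = 1 := by
      simp [hpart, qr_out_inv H q]
    rw [this, mul_one]
  have : (fun q : G ⧸ H => e.symm (y (hpartH H ((η:G) * q.out⁻¹))) (qr H ((η:G)*q.out⁻¹)))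
      = fun q => e.symm (y η) q := by
    funext q; rw [h1 q, h2 q]
  rw [this]
  simp

lemma Φ_shift (η : H) (x : G → A) :
    Φ H e (shiftAct (η : G) x) = shiftAct η (Φ H e x) := by
  funext h
  simp only [Φ, shiftAct]
  congr 1
  funext q
  congr 1
  show (η : G)⁻¹ * ((h : G) * q.out⁻¹) = ((η⁻¹ * h : H) : G) * q.out⁻¹
  push_cast
  group

lemma Ψ_shift (η : H) (x : G → A) (k : G) :
    Ψ H e (shiftAct η (Φ H e x)) k = x ((η : G)⁻¹ * k) := by
  rw [← Φ_shift, Ψ_Φ]; rfl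

/-- support of the induced pattern for `p` shifted by `τ`. -/
noncomputable def Spt (p : Pattern G A) (τ : G) : Finset H :=
  p.supp.image (fun w => hpartH H (τ⁻¹ * w))

def Compat (p : Pattern G A) (τ : G) (q : Pattern H C) : Prop :=
  q.supp = Spt H p τ ∧
    ∀ w : p.supp, ∀ hm : hpartH H (τ⁻¹ * (w : G)) ∈ q.supp,
      e.symm (q.val ⟨hpartH H (τ⁻¹ * (w : G)), hm⟩) (qr H (τ⁻¹ * (w : G))) = p.val w

def QQ (P : Set (Pattern G A)) : Set (Pattern H C) :=
  {q | ∃ p ∈ P, ∃ τQ : G ⧸ H, Compat H e p τQ.out q}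

lemma finite_fixed_supp {G' C : Type*} (S : Finset G') [Finite C] :
    {q : Pattern G' C | q.supp = S}.Finite := by
  have hsub : {q : Pattern G' C | q.supp = S} ⊆
      Set.range (fun f : (S → C) => Pattern.mk S f) := by
    rintro ⟨sp, v⟩ h
    simp only [Set.mem_setOf_eq] at h
    subst h
    exact ⟨v, rfl⟩
  have : Finite (S → C) := inferInstance
  exact (Set.finite_range _).subset hsub

lemma QQ_finite [H.FiniteIndex] [Finite C] {P : Set (Pattern G A)} (hP : P.Finite) :
    (QQ H e P).Finite := by
  have hsub : QQ H e P ⊆ ⋃ p ∈ P, ⋃ τQ : G ⧸ H,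
      {q : Pattern H C | q.supp = Spt H p τQ.out} := by
    rintro q ⟨p, hp, τQ, hc, -⟩
    exact Set.mem_biUnion hp (Set.mem_iUnion.2 ⟨τQ, hc⟩)
  exact Set.Finite.subset
    (hP.biUnion fun p _ => Set.finite_iUnion fun τQ => finite_fixed_supp _)
    hsub

lemma mem_avoids_iff (P : Set (Pattern G A)) (x : G → A) :
    x ∈ avoids P ↔ Φ H e x ∈ avoids (QQ H e P) := by
  constructor
  · -- forward
    intro hx q hq ⟨η, happ⟩
    obtain ⟨p, hp, τQ, hsupp, hval⟩ := hq
    set τ := τQ.out with hτ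
    refine hx p hp ⟨τ * (η : G), ?_⟩
    intro w
    have hm : hpartH H (τ⁻¹ * (w : G)) ∈ q.supp := by
      rw [hsupp]
      exact Finset.mem_image.2 ⟨(w : G), w.2, rfl⟩
    have h1 := happ ⟨hpartH H (τ⁻¹ * (w : G)), hm⟩
    have h2 := hval w hm
    rw [← h2, ← h1]
    show x ((τ * (η:G))⁻¹ * (w : G)) =
      e.symm (shiftAct η (Φ H e x) (hpartH H (τ⁻¹ * (w:G)))) (qr H (τ⁻¹ * (w:G)))
    have := Ψ_shift H e η x (τ⁻¹ * (w : G))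
    rw [show (e.symm (shiftAct η (Φ H e x) (hpartH H (τ⁻¹ * (w:G)))) (qr H (τ⁻¹ * (w:G))))
        = Ψ H e (shiftAct η (Φ H e x)) (τ⁻¹ * (w : G)) from rfl, this]
    congr 1
    group
  · -- backward, contrapositive
    classical
    intro hy p hp ⟨g, happ⟩
    set τ : G := (QuotientGroup.mk g : G ⧸ H).out with hτ
    have hmem : τ⁻¹ * g ∈ H := by
      have : (QuotientGroup.mk τ : G ⧸ H) = QuotientGroup.mk g := Quotient.out_eq _
      rwa [QuotientGroup.eq] at this
    set η : H := ⟨τ⁻¹ * g, hmem⟩ with hη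
    refine hy ⟨Spt H p τ, fun w => shiftAct η (Φ H e x) w⟩
      ⟨p, hp, QuotientGroup.mk g, rfl, ?_⟩ ⟨η, fun w => rfl⟩
    intro w hm
    show e.symm (shiftAct η (Φ H e x) (hpartH H (τ⁻¹ * (w:G)))) (qr H (τ⁻¹ * (w:G))) = p.val w
    rw [show (e.symm (shiftAct η (Φ H e x) (hpartH H (τ⁻¹ * (w:G)))) (qr H (τ⁻¹ * (w:G))))
        = Ψ H e (shiftAct η (Φ H e x)) (τ⁻¹ * (w : G)) from rfl, Ψ_shift]
    have : (η : G)⁻¹ * (τ⁻¹ * (w : G)) = g⁻¹ * (w : G) := by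
      rw [hη]; push_cast; group
    rw [this]
    exact happ w

end WPaux

/-- If `G` has a finite-index subgroup `H` that is weakly periodic,
then `G` is weakly periodic. -/
theorem weakly_periodic_of_finite_index_subgroup {G : Type*} [Group G]
    (H : Subgroup G) [H.FiniteIndex] (hH : WeaklyPeriodic H) :
    WeaklyPeriodic G := by
  classical
  intro A _ P hPfin hne
  set C : Type := Fin (Nat.card ((G ⧸ H) → A)) with hC
  have : Finite ((G ⧸ H) → A) := inferInstance
  set e : ((G ⧸ H) → A) ≃ C := Finite.equivFin _ with he
  obtain ⟨x0, hx0⟩ := hne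
  have hQfin : (WPaux.QQ H e P).Finite := WPaux.QQ_finite H e hPfin
  have hQne : (avoids (WPaux.QQ H e P)).Nonempty :=
    ⟨WPaux.Φ H e x0, (WPaux.mem_avoids_iff H e P x0).1 hx0⟩
  obtain ⟨y, hy, η, hη1, hηy⟩ := hH C (WPaux.QQ H e P) hQfin hQne
  refine ⟨WPaux.Ψ H e y, ?_, (η : G), ?_, ?_⟩
  · rw [WPaux.mem_avoids_iff H e P, WPaux.Φ_Ψ]
    exact hy
  · simpa using hη1
  · have h1 : WPaux.Φ H e (shiftAct (η : G) (WPaux.Ψ H e y)) = WPaux.Φ H e (WPaux.Ψ H e y) := by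
      rw [WPaux.Φ_shift, WPaux.Φ_Ψ, hηy]
    have hinj : Function.Injective (WPaux.Φ H e (A := A)) :=
      Function.LeftInverse.injective (WPaux.Ψ_Φ H e)
    exact hinj h1
end

section
/- Let G be a group with a finite-index subgroup H that is strongly periodic. Then G is strongly periodic: every nonempty shift of finite type over G contains a configuration x whose stabilizer St_G(x) has finite index in G. -/
namespace SP8

variable {G : Type*} [Group G]

lemma mem_stab_iff {A : Type*} (x : G → A) (g : G) : g ∈ stab x ↔ shiftAct g x = x := Iff.rfl

abbrev Qr (H : Subgroup G) := Quotient (QuotientGroup.rightRel H)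

variable (H : Subgroup G)

def qmk (g : G) : Qr H := Quotient.mk _ g

noncomputable def rep (q : Qr H) : G := Quotient.out q

lemma qmk_rep (q : Qr H) : qmk H (rep H q) = q := Quotient.out_eq q

lemma rel_of_qmk_eq {a b : G} (h : qmk H a = qmk H b) : b * a⁻¹ ∈ H :=
  (QuotientGroup.rightRel_apply).mp (Quotient.exact h)

lemma mem_d (g : G) : g * (rep H (qmk H g))⁻¹ ∈ H :=
  rel_of_qmk_eq H (qmk_rep H (qmk H g))

lemma qmk_mul_mem {h : G} (hh : h ∈ H) (g : G) : qmk H (h * g) = qmk H g := by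
  apply Quotient.sound
  have hrel : g * (h * g)⁻¹ ∈ H := by
    have : g * (h * g)⁻¹ = h⁻¹ := by group
    rw [this]; exact H.inv_mem hh
  exact (QuotientGroup.rightRel_apply).mpr hrel

noncomputable def dd (g : G) : H := ⟨g * (rep H (qmk H g))⁻¹, mem_d H g⟩

lemma dd_spec (g : G) : (dd H g : G) * rep H (qmk H g) = g := by
  simp [dd]

lemma dd_mul (h : H) (g : G) : dd H ((h : G) * g) = h * dd H g := by
  apply Subtype.ext
  show (h : G) * g * (rep H (qmk H ((h:G) * g)))⁻¹ = (h : G) * (g * (rep H (qmk H g))⁻¹)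
  rw [qmk_mul_mem H h.2, mul_assoc]

lemma dd_rep (q : Qr H) : dd H (rep H q) = 1 := by
  apply Subtype.ext
  show rep H q * (rep H (qmk H (rep H q)))⁻¹ = 1
  rw [qmk_rep, mul_inv_cancel]

variable {A B : Type*} (e : (Qr H → A) ≃ B)

noncomputable def Phi (x : G → A) : H → B := fun h => e fun q => x ((h : G) * rep H q)

noncomputable def Psi (y : H → B) : G → A := fun g => e.symm (y (dd H g)) (qmk H g)

lemma PsiPhi (x : G → A) : Psi H e (Phi H e x) = x := by
  funext g
  simp [Phi, Psi, dd_spec]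

lemma PhiPsi (y : H → B) : Phi H e (Psi H e y) = y := by
  funext h
  have : (fun q => Psi H e y ((h : G) * rep H q)) = fun q => e.symm (y h) q := by
    funext q
    have h1 : qmk H ((h : G) * rep H q) = q := by rw [qmk_mul_mem H h.2, qmk_rep]
    have h2 : dd H ((h : G) * rep H q) = h := by rw [dd_mul, dd_rep, mul_one]
    simp [Psi, h1, h2]
  simp only [Phi, this]
  exact e.apply_symm_apply (y h)

lemma Phi_shift (h₀ : H) (x : G → A) :
    Phi H e (shiftAct (h₀ : G) x) = shiftAct h₀ (Phi H e x) := by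
  funext h
  show e _ = e _
  congr 1
  funext q
  show x ((h₀ : G)⁻¹ * ((h : G) * rep H q)) = x ((((h₀⁻¹ * h : H)) : G) * rep H q)
  rw [Subgroup.coe_mul, mul_assoc]; rfl

noncomputable def suppOf (p : Pattern G A) (c : Qr H) : Finset H :=
  letI := Classical.decEq (↥H)
  p.supp.image fun w => dd H (rep H c * w)

lemma mem_suppOf (p : Pattern G A) (c : Qr H) (w : p.supp) :
    dd H (rep H c * (w : G)) ∈ suppOf H p c := by
  letI := Classical.decEq (↥H)
  exact Finset.mem_image_of_mem _ w.2

def compat (p : Pattern G A) (c : Qr H) (q : Pattern (↥H) B) : Prop :=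
  q.supp = suppOf H p c ∧ ∀ w : p.supp, ∃ hm : dd H (rep H c * (w : G)) ∈ q.supp,
    e.symm (q.val ⟨_, hm⟩) (qmk H (rep H c * (w : G))) = p.val w

def liftP (P : Set (Pattern G A)) : Set (Pattern (↥H) B) :=
  {q | ∃ p ∈ P, ∃ c : Qr H, compat H e p c q}

lemma finite_fixedSupp {H' B' : Type*} [Finite B'] [Nonempty B'] (s : Finset H') :
    {q : Pattern H' B' | q.supp = s}.Finite := by
  classical
  apply Set.Finite.of_finite_image
    (f := fun q => fun w : s => if h : (w : H') ∈ q.supp then q.val ⟨w, h⟩ else Classical.arbitrary B')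
  · exact Set.toFinite _
  · rintro ⟨s1, v1⟩ h1 ⟨s2, v2⟩ h2 hf
    simp only [Set.mem_setOf_eq] at h1 h2
    subst h1
    obtain rfl : s2 = s1 := h2
    have hv : v1 = v2 := by
      funext w
      have := congrFun hf ⟨(w : H'), w.2⟩
      simpa [dif_pos w.2] using this
    rw [hv]

lemma liftP_finite [Finite (Qr H)] [Finite B] [Nonempty B] {P : Set (Pattern G A)}
    (hP : P.Finite) : (liftP H e (B := B) P).Finite := by
  refine Set.Finite.subset
    (Set.Finite.biUnion hP fun p _ =>
      Set.finite_iUnion fun c : Qr H => finite_fixedSupp (suppOf H p c)) ?_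
  rintro q ⟨p, hp, c, hc1, _⟩
  exact Set.mem_biUnion hp (Set.mem_iUnion.mpr ⟨c, hc1⟩)

lemma avoids_Phi {P : Set (Pattern G A)} {x : G → A} (hx : x ∈ avoids P) :
    Phi H e x ∈ avoids (liftP H e P) := by
  rintro q ⟨p, hp, c, hqsupp, hcompat⟩ ⟨h, hap⟩
  apply hx p hp
  refine ⟨(rep H c)⁻¹ * (h : G), fun w => ?_⟩
  obtain ⟨hm, hval⟩ := hcompat w
  have h1 := hap ⟨dd H (rep H c * (w : G)), hm⟩
  set z := rep H c * (w : G) with hz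
  have key : e.symm (shiftAct h (Phi H e x) (dd H z)) (qmk H z) = x ((h : G)⁻¹ * z) := by
    show e.symm (Phi H e x (h⁻¹ * dd H z)) (qmk H z) = x ((h : G)⁻¹ * z)
    simp only [Phi, Equiv.symm_apply_apply]
    congr 1
    push_cast
    rw [mul_assoc, dd_spec]
  rw [h1, hval] at key
  show x (((rep H c)⁻¹ * (h : G))⁻¹ * (w : G)) = p.val w
  rw [key]
  congr 1
  rw [hz]
  group

lemma avoids_Psi {P : Set (Pattern G A)} {x : G → A}
    (hx : Phi H e x ∈ avoids (liftP H e P)) : x ∈ avoids P := by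
  rintro p hp ⟨g, hap⟩
  set c := qmk H g⁻¹ with hc
  set h₁ := dd H g⁻¹ with hh₁
  have hg : (h₁ : G) * rep H c = g⁻¹ := dd_spec H g⁻¹
  refine hx ⟨suppOf H p c, fun u => shiftAct h₁⁻¹ (Phi H e x) (u : H)⟩
    ⟨p, hp, c, rfl, ?_⟩ ⟨h₁⁻¹, fun u => rfl⟩
  intro w
  refine ⟨mem_suppOf H p c w, ?_⟩
  set z := rep H c * (w : G) with hz
  show e.symm (shiftAct h₁⁻¹ (Phi H e x) (dd H z)) (qmk H z) = p.val w
  have key : e.symm (shiftAct h₁⁻¹ (Phi H e x) (dd H z)) (qmk H z) = x ((h₁ : G) * z) := by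
    show e.symm (Phi H e x (h₁⁻¹⁻¹ * dd H z)) (qmk H z) = x ((h₁ : G) * z)
    rw [inv_inv]
    simp only [Phi, Equiv.symm_apply_apply]
    congr 1
    push_cast
    rw [mul_assoc, dd_spec]
  rw [key]
  have : (h₁ : G) * z = g⁻¹ * (w : G) := by rw [hz, ← mul_assoc, hg]
  rw [this]
  exact hap w

end SP8

/-- If `G` has a finite-index subgroup `H` that is strongly periodic,
then `G` is strongly periodic. -/
theorem strongly_periodic_of_finite_index_subgroup {G : Type*} [Group G]
    (H : Subgroup G) [H.FiniteIndex] (hH : StronglyPeriodic H) :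
    StronglyPeriodic G := by
  intro A _inst P hPfin hPne
  classical
  obtain ⟨x₀, hx₀⟩ := hPne
  haveI : Nonempty A := ⟨x₀ 1⟩
  haveI : Finite (G ⧸ H) :=
    (Nat.card_ne_zero.mp (Subgroup.FiniteIndex.index_ne_zero (H := H))).2
  haveI : Finite (SP8.Qr H) :=
    Finite.of_equiv _ (QuotientGroup.quotientRightRelEquivQuotientLeftRel H).symm
  haveI : Finite (SP8.Qr H → A) := inferInstance
  obtain ⟨n, ⟨e⟩⟩ := Finite.exists_equiv_fin (SP8.Qr H → A)
  haveI : Nonempty (Fin n) := ⟨e fun _ => Classical.arbitrary A⟩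
  have hfin' : (SP8.liftP H e P).Finite := SP8.liftP_finite H e hPfin
  have hne' : (avoids (SP8.liftP H e P)).Nonempty :=
    ⟨SP8.Phi H e x₀, SP8.avoids_Phi H e hx₀⟩
  obtain ⟨y, hy, hyfi⟩ := hH (Fin n) (SP8.liftP H e P) hfin' hne'
  refine ⟨SP8.Psi H e y, SP8.avoids_Psi H e (by rw [SP8.PhiPsi]; exact hy), ?_⟩
  have hsub : (stab y).map H.subtype ≤ stab (SP8.Psi H e y) := by
    rintro g ⟨k, hk, rfl⟩
    have hk' : shiftAct k y = y := hk
    rw [SP8.mem_stab_iff]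
    have h1 : SP8.Phi H e (shiftAct ((k : H) : G) (SP8.Psi H e y)) =
        SP8.Phi H e (SP8.Psi H e y) := by
      rw [SP8.Phi_shift, SP8.PhiPsi, hk']
    have h2 := congrArg (SP8.Psi H e) h1
    rw [SP8.PsiPhi, SP8.PsiPhi] at h2
    exact h2
  have h1 : ((stab y).map H.subtype).subgroupOf H = stab y :=
    Subgroup.comap_map_eq_self_of_injective H.subtype_injective _
  have h2 := Subgroup.relIndex_mul_index
    (show (stab y).map H.subtype ≤ H from Subgroup.map_subtype_le _)
  have h3 : ((stab y).map H.subtype).index ≠ 0 := by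
    rw [← h2, Subgroup.relIndex, h1]
    exact Nat.mul_ne_zero hyfi.index_ne_zero Subgroup.FiniteIndex.index_ne_zero
  exact ⟨fun h0 => h3 (zero_dvd_iff.mp (h0 ▸ Subgroup.index_dvd_of_le hsub))⟩
end

section
/- Let G be a finitely generated group and H a finite-index subgroup. If G is weakly periodic, then H is weakly periodic. -/
section WPaux

variable {G A : Type*} [Group G]

lemma shiftAct_shiftAct (g g' : G) (x : G → A) :
    shiftAct g (shiftAct g' x) = shiftAct (g * g') x := by
  funext k
  simp only [shiftAct, mul_inv_rev, mul_assoc]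

lemma Pattern.appears_of_shift {p : Pattern G A} {x : G → A} {g : G}
    (h : p.appears (shiftAct g x)) : p.appears x := by
  obtain ⟨g', h⟩ := h
  exact ⟨g' * g, fun w => by rw [← shiftAct_shiftAct]; exact h w⟩

lemma shiftAct_mem_avoids {P : Set (Pattern G A)} {x : G → A} (hx : x ∈ avoids P) (g : G) :
    shiftAct g x ∈ avoids P :=
  fun p hp hap => hx p hp (Pattern.appears_of_shift hap)

lemma mem_of_mem_map {H : Subgroup G} {s : Finset H} {u : G}
    (hu : u ∈ s.map ⟨Subtype.val, Subtype.coe_injective⟩) : u ∈ H := by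
  obtain ⟨w, hw, h⟩ := Finset.mem_map.mp hu
  exact h ▸ w.2

lemma mem_of_mem_map' {H : Subgroup G} {s : Finset H} {u : G}
    (hu : u ∈ s.map ⟨Subtype.val, Subtype.coe_injective⟩) :
    (⟨u, mem_of_mem_map hu⟩ : H) ∈ s := by
  obtain ⟨w, hw, h⟩ := Finset.mem_map.mp hu
  have hw' : w = (⟨u, mem_of_mem_map hu⟩ : H) := Subtype.ext h
  exact hw' ▸ hw

/-- Transfer a pattern over a subgroup `H` to a pattern over `G`, post-composing values
with a map `q`. -/
def transferPat {B : Type*} (H : Subgroup G) (q : A → B) (p : Pattern H A) : Pattern G B where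
  supp := p.supp.map ⟨Subtype.val, Subtype.coe_injective⟩
  val := fun u => q (p.val ⟨⟨u.1, mem_of_mem_map u.2⟩, mem_of_mem_map' u.2⟩)

lemma mem_transferPat_supp {B : Type*} (H : Subgroup G) (q : A → B) (p : Pattern H A)
    (w : p.supp) : ((w : H) : G) ∈ (transferPat H q p).supp :=
  Finset.mem_map.mpr ⟨w.1, w.2, rfl⟩

end WPaux

/-- If `G` is finitely generated and weakly periodic and `H` is a
finite-index subgroup, then `H` is weakly periodic. -/
theorem weakly_periodic_finite_index_hereditary {G : Type*} [Group G]
    (hfg : Group.FG G) (H : Subgroup G) [H.FiniteIndex]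
    (hG : WeaklyPeriodic G) : WeaklyPeriodic H := by
  classical
  intro A _instA P hPfin hPne
  obtain ⟨S, hS⟩ := hfg.out
  obtain ⟨n, ⟨e⟩⟩ := Finite.exists_equiv_fin (G ⧸ H)
  -- the alphabet of the induced SFT over G
  set B : Type := A × Fin n with hB
  -- the embedding of A values (tagged with the trivial coset)
  set q : A → B := fun a => (a, e ((1 : G) : G ⧸ H)) with hq
  set F : Pattern H A → Pattern G B := transferPat H q with hF
  -- coset-reading function
  set zf : (G → B) → G → G ⧸ H := fun y g => e.symm (y g).2 with hzf
  -- forbidden patterns enforcing the coset labelling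
  set Q1 : Set (Pattern G B) :=
    ⋃ s ∈ (S : Set G), (fun f : (({1, s} : Finset G) → B) => (⟨{1, s}, f⟩ : Pattern G B)) ''
      {f | e.symm (f ⟨s, by simp⟩).2 ≠ s⁻¹ • e.symm (f ⟨1, by simp⟩).2} with hQ1
  set Q : Set (Pattern G B) := Q1 ∪ (F '' P) with hQdef
  have hQfin : Q.Finite := by
    refine Set.Finite.union ?_ (hPfin.image F)
    exact Set.Finite.biUnion S.finite_toSet (fun s _ => (Set.toFinite _).image _)
  -- Step A: any configuration avoiding Q has the forced coset labelling
  have key : ∀ y ∈ avoids Q, ∀ g : G, zf y g = g⁻¹ • zf y 1 := by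
    intro y hy
    have step : ∀ (g s : G), s ∈ S → zf y (g * s) = s⁻¹ • zf y g := by
      intro g s hs
      by_contra hbad
      refine hy ⟨{1, s}, fun w => y (g * w.1)⟩ ?_ ?_
      · refine Or.inl (Set.mem_biUnion hs ⟨fun w => y (g * w.1), ?_, rfl⟩)
        simpa [zf, mul_one] using hbad
      · exact ⟨g⁻¹, fun w => by show y (g⁻¹⁻¹ * w.1) = y (g * w.1); rw [inv_inv]⟩
    set K : Subgroup G :=
      { carrier := {g | ∀ u, zf y (u * g) = g⁻¹ • zf y u}
        one_mem' := by intro u; simp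
        mul_mem' := by
          intro a b ha hb u
          show zf y (u * (a * b)) = (a * b)⁻¹ • zf y u
          rw [← mul_assoc, hb, ha, mul_inv_rev, mul_smul]
        inv_mem' := by
          intro a ha u
          have h1 := ha (u * a⁻¹)
          rw [inv_mul_cancel_right] at h1
          show zf y (u * a⁻¹) = a⁻¹⁻¹ • zf y u
          rw [inv_inv, h1, smul_inv_smul] } with hK
    have hKtop : ∀ g : G, g ∈ K := by
      have hle : Subgroup.closure (S : Set G) ≤ K :=
        (Subgroup.closure_le K).mpr (fun s hs u => step u s hs)
      rw [hS] at hle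
      exact fun g => hle (Subgroup.mem_top g)
    intro g
    have := hKtop g 1
    rwa [one_mul] at this
  -- Step B: the induced SFT over G is nonempty
  obtain ⟨x₀, hx₀⟩ := hPne
  have hpartmem : ∀ g : G, ((g : G ⧸ H)).out⁻¹ * g ∈ H := by
    intro g
    exact QuotientGroup.eq.mp ((QuotientGroup.mk g).out_eq)
  set y₀ : G → B := fun g => (x₀ ⟨((g : G ⧸ H)).out⁻¹ * g, hpartmem g⟩, e ((g⁻¹ : G) : G ⧸ H))
    with hy₀def
  have hk₀mem : (((1 : G) : G ⧸ H)).out ∈ H := by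
    have h1 : ((((((1 : G) : G ⧸ H)).out : G)) : G ⧸ H) = ((1 : G) : G ⧸ H) :=
      (((1 : G) : G ⧸ H)).out_eq
    have := QuotientGroup.eq.mp h1
    simpa using this
  have hy₀ : y₀ ∈ avoids Q := by
    rintro p hp hap
    rcases hp with hp | hp
    · -- Q1 patterns do not appear in y₀
      simp only [hQ1, Set.mem_iUnion] at hp
      obtain ⟨s, hs, f, hfbad, hfp⟩ := hp
      obtain ⟨g', hap⟩ := hap
      subst hfp
      apply hfbad
      have h1 : f ⟨1, by simp⟩ = y₀ (g'⁻¹ * 1) := (hap ⟨1, by simp⟩).symm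
      have h2 : f ⟨s, by simp⟩ = y₀ (g'⁻¹ * s) := (hap ⟨s, by simp⟩).symm
      show e.symm (f ⟨s, by simp⟩).2 = s⁻¹ • e.symm (f ⟨1, by simp⟩).2
      rw [h1, h2]
      show e.symm (y₀ (g'⁻¹ * s)).2 = s⁻¹ • e.symm (y₀ (g'⁻¹ * 1)).2
      simp only [hy₀def, Equiv.symm_apply_apply]
      have : s⁻¹ • (((((g'⁻¹ * 1)⁻¹ : G))) : G ⧸ H) = ((s⁻¹ * (g'⁻¹ * 1)⁻¹ : G) : G ⧸ H) := rfl
      rw [this]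
      congr 1
      group
    · -- transferred patterns do not appear in y₀
      obtain ⟨p', hp', rfl⟩ := hp
      obtain ⟨g', hap⟩ := hap
      rcases p'.supp.eq_empty_or_nonempty with hemp | ⟨w₀, hw₀⟩
      · exact hx₀ p' hp'
          ⟨1, fun w => absurd w.2 (Finset.eq_empty_iff_forall_notMem.mp hemp _)⟩
      · -- values of the appearance
        have hval : ∀ w : p'.supp,
            y₀ (g'⁻¹ * ((w : H) : G)) = q (p'.val w) := by
          intro w
          have := hap ⟨((w : H) : G), mem_transferPat_supp H q p' w⟩
          exact this
        -- g' is in H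
        have hg'H : g' ∈ H := by
          have hsnd := congrArg Prod.snd (hval ⟨w₀, hw₀⟩)
          simp only [hy₀def, hq] at hsnd
          have hcoset : (((g'⁻¹ * (w₀ : G))⁻¹ : G) : G ⧸ H) = ((1 : G) : G ⧸ H) :=
            e.injective hsnd
          have hmem := QuotientGroup.eq.mp hcoset
          simp only [mul_one, inv_inv] at hmem
          exact inv_mem_iff.mp ((mul_mem_cancel_right w₀.2).mp hmem)
        -- build the appearance of p' in x₀
        refine hx₀ p' hp' ⟨⟨g', hg'H⟩ * ⟨_, hk₀mem⟩, fun w => ?_⟩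
        have hfst := congrArg Prod.fst (hval w)
        simp only [hy₀def, hq] at hfst
        have hvH : g'⁻¹ * ((w : H) : G) ∈ H := mul_mem (inv_mem hg'H) (w : H).2
        have hcos : ((g'⁻¹ * ((w : H) : G) : G) : G ⧸ H) = ((1 : G) : G ⧸ H) := by
          rw [QuotientGroup.eq]
          simpa using inv_mem hvH
        show x₀ ((⟨g', hg'H⟩ * ⟨_, hk₀mem⟩ : H)⁻¹ * (w : H)) = p'.val w
        have harg : ((⟨g', hg'H⟩ * ⟨_, hk₀mem⟩ : H)⁻¹ * (w : H)) =
            ⟨(((g'⁻¹ * ((w : H) : G) : G) : G ⧸ H)).out⁻¹ * (g'⁻¹ * ((w : H) : G)),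
              hpartmem _⟩ := by
          apply Subtype.ext
          push_cast
          rw [hcos]
          group
        rw [harg]
        exact hfst
  -- Step C: apply weak periodicity of G
  obtain ⟨y, hy, g₀, hg₀ne, hg₀⟩ := hG B Q hQfin ⟨y₀, hy₀⟩
  set k : G := (zf y 1).out with hk
  set y' : G → B := shiftAct k⁻¹ y with hy'def
  have hy' : y' ∈ avoids Q := shiftAct_mem_avoids hy k⁻¹
  have hz' : ∀ u : G, zf y' u = ((u⁻¹ : G) : G ⧸ H) := by
    intro u
    have h1 : zf y' u = zf y (k * u) := by
      show e.symm (y (k⁻¹⁻¹ * u)).2 = e.symm (y (k * u)).2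
      rw [inv_inv]
    rw [h1, key y hy (k * u)]
    have h2 : zf y 1 = ((k : G) : G ⧸ H) := ((zf y 1).out_eq).symm
    rw [h2]
    have h3 : (k * u)⁻¹ • ((k : G) : G ⧸ H) = (((k * u)⁻¹ * k : G) : G ⧸ H) := rfl
    rw [h3]
    congr 1
    group
  set g₁ : G := k⁻¹ * g₀ * k with hg₁def
  have hg₁fix : shiftAct g₁ y' = y' := by
    show shiftAct g₁ (shiftAct k⁻¹ y) = shiftAct k⁻¹ y
    rw [shiftAct_shiftAct]
    have : g₁ * k⁻¹ = k⁻¹ * g₀ := by rw [hg₁def]; group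
    rw [this, ← shiftAct_shiftAct, hg₀]
  have hg₁ne : g₁ ≠ 1 := by
    intro h
    apply hg₀ne
    have : g₀ = k * g₁ * k⁻¹ := by rw [hg₁def]; group
    rw [this, h, mul_one, mul_inv_cancel]
  have hg₁H : g₁ ∈ H := by
    have h1 : y' (g₁⁻¹ * 1) = y' 1 := congrFun hg₁fix 1
    have h2 : zf y' (g₁⁻¹ * 1) = zf y' 1 := by
      show e.symm (y' (g₁⁻¹ * 1)).2 = e.symm (y' 1).2
      rw [h1]
    rw [hz', hz'] at h2
    have := QuotientGroup.eq.mp h2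
    simpa using this
  -- Step D: restrict to H
  set x : H → A := fun h => (y' (h : G)).1 with hx
  refine ⟨x, ?_, ⟨g₁, hg₁H⟩, fun h => hg₁ne (congrArg Subtype.val h), ?_⟩
  · -- x avoids P
    rintro p' hp' ⟨h₀, hap⟩
    refine hy' (F p') (Or.inr ⟨p', hp', rfl⟩) ⟨(h₀ : G), fun w' => ?_⟩
    obtain ⟨u, hu⟩ := w'
    show y' ((h₀ : G)⁻¹ * u) =
      q (p'.val ⟨⟨u, mem_of_mem_map hu⟩, mem_of_mem_map' hu⟩)
    have huH : u ∈ H := mem_of_mem_map hu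
    have hvH : (h₀ : G)⁻¹ * u ∈ H := mul_mem (inv_mem h₀.2) huH
    refine Prod.ext ?_ ?_
    · have := hap ⟨⟨u, huH⟩, mem_of_mem_map' hu⟩
      exact this
    · have hsnd : (y' ((h₀ : G)⁻¹ * u)).2 = e (zf y' ((h₀ : G)⁻¹ * u)) := by
        show _ = e (e.symm _)
        rw [Equiv.apply_symm_apply]
      rw [hsnd, hz']
      show e ((((h₀ : G)⁻¹ * u)⁻¹ : G) : G ⧸ H) = e ((1 : G) : G ⧸ H)
      congr 1
      rw [QuotientGroup.eq]
      simpa using hvH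
  · -- nontrivial stabilizer element
    funext h
    show x ((⟨g₁, hg₁H⟩ : H)⁻¹ * h) = x h
    show (y' (((⟨g₁, hg₁H⟩ : H)⁻¹ * h : H) : G)).1 = (y' (h : G)).1
    have hcoe : (((⟨g₁, hg₁H⟩ : H)⁻¹ * h : H) : G) = g₁⁻¹ * (h : G) := rfl
    rw [hcoe]
    have := congrFun hg₁fix (h : G)
    exact congrArg Prod.fst this
end

section
/- Let G be a finitely generated group and H a finite-index subgroup. If G is strongly periodic, then H is strongly periodic. -/
/-! Restricting a configuration on `G` to a subgroup `H` preserves avoidance of patterns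
supported in `H`. Conversely, a configuration `x` on `H` extends to `G` by copying a translate
of `x` onto every left coset; a pattern supported in `H` that appears in the extension already
appears in `x`, since a shift of its support lies in a single coset. So a nonempty SFT over `H`
induces a nonempty SFT over `G`, and a configuration `z` in it with finite-index stabilizer
restricts to a configuration over `H` whose stabilizer contains `stab z ⊓ H`. -/

namespace Pattern

variable {K G A : Type*}

noncomputable def map (f : K ↪ G) (p : Pattern K A) : Pattern G A where
  supp := p.supp.map f
  val := p.val ∘ (p.supp.equivMap f).symm

@[simp]
lemma map_val_equivMap (f : K ↪ G) (p : Pattern K A) (u : p.supp) :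
    (p.map f).val (p.supp.equivMap f u) = p.val u := by
  simp [map]

end Pattern

section Subgroup

variable {G A : Type*} [Group G] {H : Subgroup G}

lemma Pattern.appears_map_subtype_of_appears_comp {p : Pattern H A} {z : G → A}
    (hp : p.appears (z ∘ Subtype.val)) : (p.map (.subtype _)).appears z := by
  obtain ⟨k, hk⟩ := hp
  refine ⟨k, fun w => ?_⟩
  obtain ⟨u, rfl⟩ := (p.supp.equivMap _).surjective w
  simpa [shiftAct] using hk u

lemma comp_subtype_mem_avoids {P : Set (Pattern H A)} {z : G → A}
    (hz : z ∈ avoids (Pattern.map (.subtype _) '' P)) : z ∘ Subtype.val ∈ avoids P :=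
  fun p hp hpz => hz _ ⟨p, hp, rfl⟩ (Pattern.appears_map_subtype_of_appears_comp hpz)

lemma subgroupOf_stab_le_stab_comp_subtype (z : G → A) :
    (stab z).subgroupOf H ≤ stab (z ∘ Subtype.val) := by
  intro k hk
  funext h
  exact congrFun hk h

variable (H) in
noncomputable def extendByCosets (x : H → A) : G → A :=
  fun g => x ⟨(g : G ⧸ H).out⁻¹ * g, QuotientGroup.eq.mp (QuotientGroup.out_eq' _)⟩

lemma exists_extendByCosets_mul_eq (x : H → A) (g : G) :
    ∃ c : H, ∀ h : H, extendByCosets H x (g * h) = x (c * h) := by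
  refine ⟨⟨(g : G ⧸ H).out⁻¹ * g, QuotientGroup.eq.mp (QuotientGroup.out_eq' _)⟩, fun h => ?_⟩
  have hcoset : ((g * h : G) : G ⧸ H) = g := by simp
  simp only [extendByCosets, hcoset]
  congr 1
  ext
  simp [mul_assoc]

lemma Pattern.appears_of_appears_extendByCosets {p : Pattern H A} {x : H → A}
    (hp : (p.map (.subtype _)).appears (extendByCosets H x)) : p.appears x := by
  obtain ⟨g, hg⟩ := hp
  obtain ⟨c, hc⟩ := exists_extendByCosets_mul_eq x g⁻¹
  refine ⟨c⁻¹, fun u => ?_⟩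
  simpa [shiftAct, hc] using hg (p.supp.equivMap _ u)

lemma extendByCosets_mem_avoids {P : Set (Pattern H A)} {x : H → A} (hx : x ∈ avoids P) :
    extendByCosets H x ∈ avoids (Pattern.map (.subtype _) '' P) := by
  rintro _ ⟨p, hp, rfl⟩ hpx
  exact hx p hp (Pattern.appears_of_appears_extendByCosets hpx)

end Subgroup

theorem strongly_periodic_finite_index_hereditary_general {G : Type*} [Group G]
    (H : Subgroup G) [H.FiniteIndex]
    (hG : StronglyPeriodic G) : StronglyPeriodic H := by
  intro A _ P hP ⟨x, hx⟩
  obtain ⟨z, hz, hstab⟩ := hG A _ (hP.image _) ⟨_, extendByCosets_mem_avoids hx⟩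
  exact ⟨z ∘ Subtype.val, comp_subtype_mem_avoids hz,
    Subgroup.finiteIndex_of_le (subgroupOf_stab_le_stab_comp_subtype z)⟩

/-- If `G` is finitely generated and strongly periodic and `H` is a
finite-index subgroup, then `H` is strongly periodic. -/
theorem strongly_periodic_finite_index_hereditary {G : Type*} [Group G]
    (hfg : Group.FG G) (H : Subgroup G) [H.FiniteIndex]
    (hG : StronglyPeriodic G) : StronglyPeriodic H :=
  strongly_periodic_finite_index_hereditary_general H hG
end

section
/- Weak periodicity is a commensurability invariant for finitely generated groups: if G₁ and G₂ are finitely generated commensurable groups and G₁ is weakly periodic, then G₂ is weakly periodic. -/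
namespace CommensWP

universe u v

variable {G A A' : Type*} [Group G]

/-- Map a pattern along an alphabet map. -/
def Pattern.mapA (f : A → A') (p : Pattern G A) : Pattern G A' :=
  ⟨p.supp, fun w => f (p.val w)⟩

theorem shiftAct_comp (f : A → A') (g : G) (x : G → A) :
    shiftAct g (f ∘ x) = f ∘ shiftAct g x := rfl

theorem appears_mapA (e : A ≃ A') (p : Pattern G A) (x : G → A) :
    (Pattern.mapA e p).appears (e ∘ x) ↔ p.appears x := by
  constructor
  · rintro ⟨g, hg⟩
    exact ⟨g, fun w => e.injective (hg w)⟩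
  · rintro ⟨g, hg⟩
    exact ⟨g, fun w => congrArg e (hg w)⟩

theorem avoids_mapA (e : A ≃ A') (P : Set (Pattern G A)) (x : G → A) :
    e ∘ x ∈ avoids (Pattern.mapA (G := G) e '' P) ↔ x ∈ avoids P := by
  constructor
  · intro h p hp hap
    exact h _ ⟨p, hp, rfl⟩ ((appears_mapA e p x).2 hap)
  · rintro h _ ⟨p, hp, rfl⟩ hap
    exact h p hp ((appears_mapA e p x).1 hap)

/-- Weak periodicity with `Finite` alphabets in `Type 0`. -/
def WPF (G : Type*) [Group G] : Prop :=
  ∀ (A : Type) [Finite A] (P : Set (Pattern G A)), P.Finite →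
    (avoids P).Nonempty → ∃ x ∈ avoids P, ∃ g : G, g ≠ 1 ∧ shiftAct g x = x

/-- From `WPF` we may handle finite alphabets in any universe. -/
theorem WPF.elim (hG : WPF G) (A : Type v) [Finite A] (P : Set (Pattern G A))
    (hP : P.Finite) (hne : (avoids P).Nonempty) :
    ∃ x ∈ avoids P, ∃ g : G, g ≠ 1 ∧ shiftAct g x = x := by
  obtain ⟨n, ⟨e⟩⟩ := Finite.exists_equiv_fin A
  obtain ⟨x₀, hx₀⟩ := hne
  obtain ⟨y, hy, g, hg1, hgy⟩ := hG (Fin n) (Pattern.mapA (G := G) e '' P)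
      (hP.image _) ⟨e ∘ x₀, (avoids_mapA e P x₀).2 hx₀⟩
  refine ⟨e.symm ∘ y, ?_, g, hg1, ?_⟩
  · have : e ∘ (e.symm ∘ y) = y := by funext k; simp
    have := (avoids_mapA e P (e.symm ∘ y)).1 (by rw [this]; exact hy)
    exact this
  · rw [shiftAct_comp, hgy]

theorem wpf_of_weaklyPeriodic (hG : WeaklyPeriodic G) : WPF G := by
  intro A _ P hP hne
  have : Fintype A := Fintype.ofFinite A
  exact hG A P hP hne

theorem weaklyPeriodic_of_wpf (hG : WPF G) : WeaklyPeriodic G := by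
  intro A _ P hP hne
  exact hG A P hP hne

end CommensWP
namespace CommensWP

variable {G G' A : Type*} [Group G] [Group G']

/-- Map a pattern along a group isomorphism. -/
def Pattern.mapG (e : G ≃* G') (p : Pattern G A) : Pattern G' A where
  supp := p.supp.map ⟨⇑e, e.injective⟩
  val w := p.val ⟨e.symm w, by
    obtain ⟨a, ha, he⟩ := Finset.mem_map.mp w.2
    simp only [Function.Embedding.coeFn_mk] at he
    simpa [← he] using ha⟩

theorem shiftAct_comp_equiv (e : G ≃* G') (g : G) (x : G → A) :
    shiftAct (e g) (x ∘ ⇑e.symm) = (shiftAct g x) ∘ ⇑e.symm := by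
  funext k
  simp [shiftAct, map_mul, map_inv]

theorem appears_mapG (e : G ≃* G') (p : Pattern G A) (x : G → A) :
    (Pattern.mapG e p).appears (x ∘ ⇑e.symm) ↔ p.appears x := by
  constructor
  · rintro ⟨g', hg'⟩
    refine ⟨e.symm g', fun w => ?_⟩
    have hw : (e ↑w) ∈ (Pattern.mapG e p).supp :=
      Finset.mem_map.mpr ⟨↑w, w.2, rfl⟩
    have := hg' ⟨e ↑w, hw⟩
    simp only [shiftAct, Function.comp_apply, Pattern.mapG] at this ⊢
    rw [map_mul, map_inv] at this
    have hval : p.val ⟨e.symm (e ↑w), by simp⟩ = p.val w :=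
      congrArg p.val (Subtype.ext (e.symm_apply_apply _))
    have this2 := this.trans hval
    rwa [e.symm_apply_apply] at this2
  · rintro ⟨g, hg⟩
    refine ⟨e g, fun w' => ?_⟩
    have hm : e.symm ↑w' ∈ p.supp := by
      obtain ⟨a, ha, he⟩ := Finset.mem_map.mp w'.2
      simp only [Function.Embedding.coeFn_mk] at he
      simpa [← he] using ha
    have := hg ⟨e.symm ↑w', hm⟩
    simp only [shiftAct, Function.comp_apply, Pattern.mapG] at this ⊢
    rw [map_mul, map_inv, e.symm_apply_apply]
    exact this

theorem lemC (e : G ≃* G') (h : WPF G) : WPF G' := by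
  intro A _ P' hP' hne'
  set P : Set (Pattern G A) := Pattern.mapG e.symm '' P' with hPdef
  have key : ∀ (p' : Pattern G' A) (x : G → A),
      (Pattern.mapG e.symm p').appears x ↔ p'.appears (x ∘ ⇑e.symm) := by
    intro p' x
    have := appears_mapG e.symm p' (x ∘ ⇑e.symm)
    have hxx : (x ∘ ⇑e.symm) ∘ ⇑e.symm.symm = x := by
      funext k; simp
    rwa [hxx] at this
  obtain ⟨x₀', hx₀'⟩ := hne'
  have hne : (avoids P).Nonempty := by
    refine ⟨x₀' ∘ ⇑e, ?_⟩
    rintro _ ⟨p', hp', rfl⟩ hap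
    have hxx : (x₀' ∘ ⇑e) ∘ ⇑e.symm = x₀' := by funext k; simp
    exact hx₀' p' hp' (by rw [← hxx]; exact (key p' _).1 hap)
  obtain ⟨x, hx, g, hg1, hgx⟩ := h A P (hP'.image _) hne
  refine ⟨x ∘ ⇑e.symm, ?_, e g, fun hc => hg1 (by simpa using congrArg e.symm hc), ?_⟩
  · intro p' hp' hap
    exact hx _ ⟨p', hp', rfl⟩ ((key p' x).2 hap)
  · rw [shiftAct_comp_equiv, hgx]

end CommensWP
namespace CommensWP

variable {G : Type*} [Group G]

/-- The quotient of `G` by the right cosets of `H`. -/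
abbrev rQ (H : Subgroup G) := Quotient (QuotientGroup.rightRel H)

/-- The class of `g` among right cosets. -/
def rmk (H : Subgroup G) (g : G) : rQ H := Quotient.mk (QuotientGroup.rightRel H) g

instance (H : Subgroup G) [H.FiniteIndex] : Finite (rQ H) :=
  Finite.of_equiv _ (QuotientGroup.quotientRightRelEquivQuotientLeftRel H).symm

theorem rmk_out (H : Subgroup G) (q : rQ H) : rmk H (Quotient.out q) = q :=
  Quotient.out_eq q

theorem hpart_mem (H : Subgroup G) (g : G) : g * (Quotient.out (rmk H g))⁻¹ ∈ H :=
  QuotientGroup.rightRel_apply.mp (Quotient.mk_out g)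

theorem rmk_mul_left (H : Subgroup G) {h : G} (hh : h ∈ H) (g : G) :
    rmk H (h * g) = rmk H g := by
  refine Quotient.sound (QuotientGroup.rightRel_apply.mpr ?_)
  simpa [mul_inv_rev, ← mul_assoc] using H.inv_mem hh

theorem rmk_eq_rmk_one_iff (H : Subgroup G) (g : G) : rmk H g = rmk H 1 ↔ g ∈ H := by
  constructor
  · intro h
    have := QuotientGroup.rightRel_apply.mp (Quotient.exact h)
    simpa using H.inv_mem this
  · intro h
    exact Quotient.sound (QuotientGroup.rightRel_apply.mpr (by simpa using H.inv_mem h))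

/-- The `H`-component of `g` in the decomposition `g = h * out (rmk g)`. -/
noncomputable def rpart (H : Subgroup G) (g : G) : H :=
  ⟨g * (Quotient.out (rmk H g))⁻¹, hpart_mem H g⟩

theorem rpart_spec (H : Subgroup G) (g : G) :
    ↑(rpart H g) * Quotient.out (rmk H g) = g := by
  simp [rpart]

theorem rmk_coe_mul (H : Subgroup G) (h : H) (g : G) : rmk H (↑h * g) = rmk H g :=
  rmk_mul_left H h.2 g

theorem rpart_coe_mul_out (H : Subgroup G) (h : H) (q : rQ H) :
    rpart H (↑h * Quotient.out q) = h := by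
  refine Subtype.ext ?_
  show (↑h * Quotient.out q) * (Quotient.out (rmk H (↑h * Quotient.out q)))⁻¹ = ↑h
  rw [rmk_coe_mul, rmk_out]
  simp [mul_assoc]

end CommensWP
namespace CommensWP

universe v

variable {G : Type*} [Group G] {A : Type v}

open scoped Classical

/-- Recode a `G`-configuration as an `H`-configuration over alphabet `rQ H → A`. -/
noncomputable def psiB (H : Subgroup G) (x : G → A) : H → (rQ H → A) :=
  fun h q => x (↑h * Quotient.out q)

/-- Inverse recoding. -/
noncomputable def psiB' (H : Subgroup G) (y : H → rQ H → A) : G → A :=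
  fun g => y (rpart H g) (rmk H g)

theorem psiB_psiB' (H : Subgroup G) (y : H → rQ H → A) : psiB H (psiB' H y) = y := by
  funext h q
  show y (rpart H (↑h * Quotient.out q)) (rmk H (↑h * Quotient.out q)) = y h q
  rw [rpart_coe_mul_out, rmk_coe_mul, rmk_out]

theorem psiB'_psiB (H : Subgroup G) (x : G → A) : psiB' H (psiB H x) = x := by
  funext g
  show x (↑(rpart H g) * Quotient.out (rmk H g)) = x g
  rw [rpart_spec]

theorem psiB_equivariant (H : Subgroup G) (h₀ : H) (x : G → A) :
    psiB H (shiftAct (↑h₀ : G) x) = shiftAct h₀ (psiB H x) := by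
  funext h q
  show x ((↑h₀)⁻¹ * (↑h * Quotient.out q)) = x (↑(h₀⁻¹ * h) * Quotient.out q)
  rw [Subgroup.coe_mul]
  simp [mul_assoc]

/-- Support of the transferred pattern. -/
noncomputable def liftFB (H : Subgroup G) (p : Pattern G A) (q₀ : rQ H) : Finset H :=
  p.supp.attach.image (fun w => rpart H (Quotient.out q₀ * ↑w))

theorem memliftF (H : Subgroup G) (p : Pattern G A) (q₀ : rQ H) (w : p.supp) :
    rpart H (Quotient.out q₀ * ↑w) ∈ liftFB H p q₀ :=
  Finset.mem_image.mpr ⟨w, Finset.mem_attach _ _, rfl⟩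

/-- The set of `H`-patterns corresponding to a `G`-pattern `p` at coset `q₀`. -/
noncomputable def patSetB (H : Subgroup G) (p : Pattern G A) (q₀ : rQ H) :
    Set (Pattern H (rQ H → A)) :=
  (fun v : ({u : H // u ∈ liftFB H p q₀} → (rQ H → A)) =>
      Pattern.mk (liftFB H p q₀) v) ''
    {v | ∀ w : p.supp, v ⟨rpart H (Quotient.out q₀ * ↑w), memliftF H p q₀ w⟩
          (rmk H (Quotient.out q₀ * ↑w)) = p.val w}

theorem hcompB (H : Subgroup G) (x : G → A) (h : H) (g : G) :
    x (↑h * g) = psiB H x (h * rpart H g) (rmk H g) := by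
  show x (↑h * g) = x (↑(h * rpart H g) * Quotient.out (rmk H g))
  rw [Subgroup.coe_mul, mul_assoc, rpart_spec]

theorem corrB (H : Subgroup G) (p : Pattern G A) (x : G → A) :
    p.appears x ↔ ∃ q₀ : rQ H, ∃ π ∈ patSetB H p q₀, π.appears (psiB H x) := by
  constructor
  · rintro ⟨g, hg⟩
    refine ⟨rmk H g⁻¹, ?_⟩
    set h : H := rpart H g⁻¹ with hh
    set q₀ : rQ H := rmk H g⁻¹ with hq₀
    have hdec : (↑h : G) * Quotient.out q₀ = g⁻¹ := rpart_spec H g⁻¹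
    have key : ∀ w : p.supp,
        psiB H x (h * rpart H (Quotient.out q₀ * ↑w)) (rmk H (Quotient.out q₀ * ↑w))
          = p.val w := by
      intro w
      rw [← hcompB]
      have : (↑h : G) * (Quotient.out q₀ * ↑w) = g⁻¹ * ↑w := by
        rw [← mul_assoc, hdec]
      rw [this]
      exact hg w
    refine ⟨Pattern.mk (liftFB H p q₀)
        (fun u : {u : H // u ∈ liftFB H p q₀} => psiB H x (h * ↑u)),
      ⟨fun u : {u : H // u ∈ liftFB H p q₀} => psiB H x (h * ↑u), fun w => key w, rfl⟩, h⁻¹, ?_⟩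
    intro u
    show psiB H x (h⁻¹⁻¹ * ↑u) = psiB H x (h * ↑u)
    rw [inv_inv]
  · rintro ⟨q₀, π, ⟨v, hv, rfl⟩, a, ha⟩
    refine ⟨((↑(a⁻¹) : G) * Quotient.out q₀)⁻¹, fun w => ?_⟩
    have h1 : (((↑(a⁻¹) * Quotient.out q₀ : G))⁻¹)⁻¹ * ↑w
        = (↑(a⁻¹) : G) * (Quotient.out q₀ * ↑w) := by rw [inv_inv, mul_assoc]
    show x ((((↑(a⁻¹) * Quotient.out q₀ : G))⁻¹)⁻¹ * ↑w) = p.val w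
    rw [h1, hcompB H x a⁻¹ (Quotient.out q₀ * ↑w)]
    have h2 := ha ⟨rpart H (Quotient.out q₀ * ↑w), memliftF H p q₀ w⟩
    simp only [shiftAct] at h2
    rw [← hv w]
    exact congrFun h2 _

end CommensWP
namespace CommensWP

variable {G : Type*} [Group G]

theorem lemB (H : Subgroup G) [H.FiniteIndex] (hH : WPF H) : WPF G := by
  intro A _ P hP hne
  set P' : Set (Pattern H (rQ H → A)) := ⋃ p ∈ P, ⋃ q₀ : rQ H, patSetB H p q₀ with hP'
  have hP'fin : P'.Finite :=
    hP.biUnion fun p _ => Set.finite_iUnion fun q₀ => (Set.toFinite _).image _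
  have fwd : ∀ x ∈ avoids P, psiB H x ∈ avoids P' := by
    intro x hx π hπ hap
    simp only [hP', Set.mem_iUnion] at hπ
    obtain ⟨p, hp, q₀, hπ⟩ := hπ
    exact hx p hp ((corrB H p x).2 ⟨q₀, π, hπ, hap⟩)
  obtain ⟨x₀, hx₀⟩ := hne
  obtain ⟨y, hy, h₀, hh₀, hfix⟩ := hH.elim (rQ H → A) P' hP'fin ⟨psiB H x₀, fwd x₀ hx₀⟩
  refine ⟨psiB' H y, ?_, (↑h₀ : G), ?_, ?_⟩
  · intro p hp hap
    obtain ⟨q₀, π, hπ, hapπ⟩ := (corrB H p (psiB' H y)).1 hap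
    rw [psiB_psiB'] at hapπ
    refine hy π ?_ hapπ
    simp only [hP', Set.mem_iUnion]
    exact ⟨p, hp, q₀, hπ⟩
  · intro hc
    exact hh₀ (Subtype.ext (by simpa using hc))
  · have h5 : psiB H (shiftAct (↑h₀ : G) (psiB' H y)) = psiB H (psiB' H y) := by
      rw [psiB_equivariant, psiB_psiB', hfix]
    have := congrArg (psiB' H) h5
    rwa [psiB'_psiB, psiB'_psiB] at this

end CommensWP
namespace CommensWP

universe v

variable {G : Type*} [Group G] {B : Type v}

open scoped Classical

/-- Right multiplication action on the right-coset space. -/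
noncomputable def rho (H : Subgroup G) (g : G) (q : rQ H) : rQ H :=
  rmk H (Quotient.out q * g)

theorem rho_rmk (H : Subgroup G) (g u : G) : rho H g (rmk H u) = rmk H (u * g) := by
  refine Quotient.sound (QuotientGroup.rightRel_apply.mpr ?_)
  have heq : (u * g) * (Quotient.out (rmk H u) * g)⁻¹ = u * (Quotient.out (rmk H u))⁻¹ := by
    group
  rw [heq]
  exact hpart_mem H u

theorem rho_mul (H : Subgroup G) (g g' : G) (q : rQ H) :
    rho H g' (rho H g q) = rho H (g * g') q := by
  conv_lhs => rw [← rmk_out H q]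
  conv_rhs => rw [← rmk_out H q]
  rw [rho_rmk, rho_rmk, rho_rmk, mul_assoc]

theorem rho_one (H : Subgroup G) (q : rQ H) : rho H 1 q = q := by
  conv_lhs => rw [← rmk_out H q]
  rw [rho_rmk, mul_one, rmk_out]

/-- The coloring-consistency forbidden patterns for generator `s`. -/
noncomputable def pat1 (H : Subgroup G) (B : Type v) (s : G) : Set (Pattern G (B × rQ H)) :=
  (fun v : ({u : G // u ∈ ({1, s} : Finset G)} → B × rQ H) =>
      Pattern.mk ({1, s} : Finset G) v) ''
    {v | (v ⟨s, by simp⟩).2 ≠ rho H s (v ⟨1, by simp⟩).2}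

theorem pat1_avoid (H : Subgroup G) (x : G → B × rQ H) (s : G)
    (hx : ∀ p ∈ pat1 H B s, ¬ p.appears x) :
    ∀ u : G, (x (u * s)).2 = rho H s (x u).2 := by
  intro u
  by_contra hne
  refine hx (Pattern.mk ({1, s} : Finset G)
      (fun w : {u' : G // u' ∈ ({1, s} : Finset G)} => x (u * ↑w)))
    ⟨fun w : {u' : G // u' ∈ ({1, s} : Finset G)} => x (u * ↑w), ?_, rfl⟩ ?_
  · show (x (u * s)).2 ≠ rho H s (x (u * 1)).2
    rwa [mul_one]
  · refine ⟨u⁻¹, fun w => ?_⟩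
    show x (u⁻¹⁻¹ * ↑w) = x (u * ↑w)
    rw [inv_inv]

theorem pat1_construct (H : Subgroup G) (x : G → B × rQ H)
    (hcol : ∀ g, (x g).2 = rmk H g) (s : G) :
    ∀ p ∈ pat1 H B s, ¬ p.appears x := by
  rintro _ ⟨v, hv, rfl⟩ ⟨g, hg⟩
  have h1 := hg ⟨1, by simp⟩
  have hs := hg ⟨s, by simp⟩
  simp only [shiftAct] at h1 hs
  apply hv
  show (v ⟨s, by simp⟩).2 = rho H s (v ⟨1, by simp⟩).2
  rw [← h1, ← hs, hcol, hcol, mul_one, rho_rmk]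

/-- A locally consistent coloring is globally consistent. -/
theorem rigidity (H : Subgroup G) (S : Set G) (hS : Subgroup.closure S = ⊤)
    (τ : G → rQ H) (hstep : ∀ s ∈ S, ∀ u : G, τ (u * s) = rho H s (τ u)) :
    ∀ u g, τ (u * g) = rho H g (τ u) := by
  set K : Subgroup G :=
    { carrier := {g | ∀ u, τ (u * g) = rho H g (τ u)}
      one_mem' := by
        intro u
        rw [mul_one, rho_one]
      mul_mem' := by
        intro a b ha hb u
        rw [← mul_assoc, hb, ha, rho_mul]
      inv_mem' := by
        intro a ha u
        have h1 := ha (u * a⁻¹)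
        rw [mul_assoc, inv_mul_cancel, mul_one] at h1
        have h2 : rho H a⁻¹ (τ u) = rho H a⁻¹ (rho H a (τ (u * a⁻¹))) := by rw [← h1]
        rw [rho_mul, mul_inv_cancel, rho_one] at h2
        exact h2.symm } with hK
  have hKtop : K = ⊤ := by
    rw [eq_top_iff, ← hS]
    exact (Subgroup.closure_le K).mpr fun s hs => fun u => hstep s hs u
  intro u g
  exact (hKtop ▸ Subgroup.mem_top g : g ∈ K) u

theorem shiftAct_mul {A : Type*} (g a : G) (x : G → A) :
    shiftAct g (shiftAct a x) = shiftAct (g * a) x := by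
  funext k
  simp [shiftAct, mul_assoc]

theorem avoids_shift {A : Type*} (P : Set (Pattern G A)) (a : G) (x : G → A)
    (hx : x ∈ avoids P) : shiftAct a x ∈ avoids P := by
  rintro p hp ⟨g, hg⟩
  refine hx p hp ⟨g * a, fun w => ?_⟩
  rw [← shiftAct_mul]
  exact hg w

end CommensWP
namespace CommensWP

universe v

variable {G : Type*} [Group G] {B : Type v}

open scoped Classical

/-- Recover the `H`-support element from an element of the mapped support. -/
def liftMem (H : Subgroup G) (q : Pattern H B)
    (w : {g : G // g ∈ q.supp.map ⟨Subtype.val, Subtype.val_injective⟩}) :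
    {h : H // h ∈ q.supp} :=
  ⟨⟨↑w, by
      obtain ⟨a, ha, he⟩ := Finset.mem_map.mp w.2
      simp only [Function.Embedding.coeFn_mk] at he
      exact he ▸ a.2⟩, by
    obtain ⟨⟨av, ah⟩, ha, he⟩ := Finset.mem_map.mp w.2
    simp only [Function.Embedding.coeFn_mk] at he
    subst he
    exact ha⟩

/-- Lift an `H`-pattern to a `G`-pattern over the augmented alphabet. -/
def liftPat (H : Subgroup G) (q : Pattern H B) : Pattern G (B × rQ H) :=
  ⟨q.supp.map ⟨Subtype.val, Subtype.val_injective⟩,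
   fun w => (q.val (liftMem H q w), rmk H 1)⟩

theorem lemA (H : Subgroup G) [H.FiniteIndex] (hfg : Group.FG G) (hG : WPF G) :
    WPF H := by
  intro B _ Pq hPq hne
  obtain ⟨S, hS, hSfin⟩ := Group.fg_iff.mp hfg
  set P1 : Set (Pattern G (B × rQ H)) := ⋃ s ∈ S, pat1 H B s with hP1
  set P2 : Set (Pattern G (B × rQ H)) := liftPat H '' Pq with hP2
  have hPfin : (P1 ∪ P2).Finite := by
    refine Set.Finite.union ?_ (hPq.image _)
    exact hSfin.biUnion fun s _ => (Set.toFinite _).image _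
  -- the initial configuration
  obtain ⟨y₀, hy₀⟩ := hne
  set x₀ : G → B × rQ H :=
    fun g => (if hg : g ∈ H then y₀ ⟨g, hg⟩ else y₀ 1, rmk H g) with hx₀def
  -- a general P2-avoidance criterion
  have hP2avoid : ∀ x : G → B × rQ H,
      (∀ g, (x g).2 = rmk H g) → (fun h : H => (x ↑h).1) ∈ avoids Pq →
      ∀ p ∈ P2, ¬ p.appears x := by
    intro x hxcol hyav
    rintro _ ⟨q, hq, rfl⟩ ⟨g, hg⟩
    rcases Finset.eq_empty_or_nonempty q.supp with hemp | ⟨w0, hw0⟩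
    · refine hyav q hq ⟨1, fun wq => ?_⟩
      exact absurd wq.2 (by simp [hemp])
    · have hw0' : (↑w0 : G) ∈ q.supp.map ⟨Subtype.val, Subtype.val_injective⟩ :=
        Finset.mem_map.mpr ⟨w0, hw0, rfl⟩
      have h0 := hg ⟨↑w0, hw0'⟩
      simp only [shiftAct, liftPat] at h0
      have hginH : g⁻¹ * ↑w0 ∈ H := by
        have := congrArg Prod.snd h0
        simp only [hxcol] at this
        exact (rmk_eq_rmk_one_iff H _).mp this
      have hgH : g ∈ H := by
        have : g⁻¹ ∈ H := by
          have := H.mul_mem hginH (H.inv_mem w0.2)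
          simpa [mul_assoc] using this
        simpa using H.inv_mem this
      refine hyav q hq ⟨⟨g, hgH⟩, fun wq => ?_⟩
      have hwm : (↑↑wq : G) ∈ q.supp.map ⟨Subtype.val, Subtype.val_injective⟩ :=
        Finset.mem_map.mpr ⟨↑wq, wq.2, rfl⟩
      have hw := hg ⟨↑↑wq, hwm⟩
      simp only [shiftAct, liftPat] at hw
      have hfst := congrArg Prod.fst hw
      show (x (g⁻¹ * ↑↑wq)).1 = q.val wq
      rw [hfst]
      congr 1
  have hx₀ : x₀ ∈ avoids (P1 ∪ P2) := by
    intro p hp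
    rcases hp with hp | hp
    · simp only [hP1, Set.mem_iUnion] at hp
      obtain ⟨s, hs, hp⟩ := hp
      exact pat1_construct H x₀ (fun g => rfl) s p hp
    · refine hP2avoid x₀ (fun g => rfl) ?_ p hp
      have hyy : (fun h : H => (x₀ ↑h).1) = y₀ := by
        funext h
        show (if hg : (↑h : G) ∈ H then y₀ ⟨↑h, hg⟩ else y₀ 1) = y₀ h
        rw [dif_pos h.2]
      rw [hyy]
      exact hy₀
  obtain ⟨x, hx, g₀, hg₀, hfix⟩ := hG.elim (B × rQ H) (P1 ∪ P2) hPfin ⟨x₀, hx₀⟩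
  have hstep : ∀ s ∈ S, ∀ u : G, (x (u * s)).2 = rho H s (x u).2 := by
    intro s hs
    refine pat1_avoid H x s fun p hp => hx p (Or.inl ?_)
    simp only [hP1, Set.mem_iUnion]
    exact ⟨s, hs, hp⟩
  have hτ := rigidity H S hS (fun g => (x g).2) hstep
  set u₀ : G := Quotient.out ((x 1).2) with hu₀
  have hcolx : ∀ g : G, (x g).2 = rmk H (u₀ * g) := by
    intro g
    have h1 := hτ 1 g
    rw [one_mul] at h1
    rw [show (x g).2 = rho H g ((x 1).2) from h1]
    conv_lhs => rw [← rmk_out H ((x 1).2)]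
    rw [rho_rmk]
  set x' := shiftAct u₀ x with hx'def
  have hx' : x' ∈ avoids (P1 ∪ P2) := avoids_shift _ u₀ x hx
  have hcolx' : ∀ g, (x' g).2 = rmk H g := by
    intro g
    show (x (u₀⁻¹ * g)).2 = rmk H g
    rw [hcolx, mul_inv_cancel_left]
  set g₁ : G := u₀ * g₀ * u₀⁻¹ with hg₁def
  have hfix' : shiftAct g₁ x' = x' := by
    have hgu : g₁ * u₀ = u₀ * g₀ := by rw [hg₁def]; group
    calc shiftAct g₁ x' = shiftAct (g₁ * u₀) x := shiftAct_mul _ _ _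
      _ = shiftAct (u₀ * g₀) x := by rw [hgu]
      _ = shiftAct u₀ (shiftAct g₀ x) := (shiftAct_mul _ _ _).symm
      _ = x' := by rw [hfix]
  have hg₁ne : g₁ ≠ 1 := by
    intro hc
    apply hg₀
    have hrw : g₀ = u₀⁻¹ * g₁ * u₀ := by rw [hg₁def]; group
    rw [hrw, hc]
    group
  have hg₁H : g₁ ∈ H := by
    have h0 := congrArg Prod.snd (congrFun hfix' 1)
    simp only [shiftAct] at h0
    rw [mul_one, hcolx', hcolx'] at h0
    have := (rmk_eq_rmk_one_iff H g₁⁻¹).mp h0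
    simpa using H.inv_mem this
  set y : H → B := fun h => (x' ↑h).1 with hydef
  have hyav : y ∈ avoids Pq := by
    rintro q hq ⟨a, ha⟩
    refine hx' (liftPat H q) (Or.inr ⟨q, hq, rfl⟩) ⟨↑a, fun w => ?_⟩
    have hw := ha (liftMem H q w)
    simp only [shiftAct, hydef] at hw ⊢
    refine Prod.ext ?_ ?_
    · exact hw
    · show (x' ((↑a)⁻¹ * ↑w)).2 = rmk H 1
      rw [hcolx']
      exact (rmk_eq_rmk_one_iff H _).mpr (H.mul_mem (H.inv_mem a.2) (liftMem H q w).1.2)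
  refine ⟨y, hyav, ⟨g₁, hg₁H⟩, ?_, ?_⟩
  · intro hc
    exact hg₁ne (by simpa using congrArg Subtype.val hc)
  · funext h
    have h2 := congrFun hfix' ↑h
    simp only [shiftAct] at h2
    exact congrArg Prod.fst h2

end CommensWP

/-- Weak periodicity is a commensurability invariant for finitely
generated groups: if `G₁`, `G₂` are finitely generated and have isomorphic
finite-index subgroups, and `G₁` is weakly periodic, then so is `G₂`. -/
theorem weakly_periodic_commensurability_invariant {G₁ G₂ : Type*} [Group G₁] [Group G₂]
    (hfg₁ : Group.FG G₁) (hfg₂ : Group.FG G₂)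
    (H₁ : Subgroup G₁) (H₂ : Subgroup G₂) (h₁ : H₁.FiniteIndex) (h₂ : H₂.FiniteIndex)
    (iso : Nonempty (H₁ ≃* H₂)) (hG₁ : WeaklyPeriodic G₁) : WeaklyPeriodic G₂ := by
  obtain ⟨e⟩ := iso
  haveI := h₁
  haveI := h₂
  exact CommensWP.weaklyPeriodic_of_wpf
    (CommensWP.lemB H₂ (CommensWP.lemC e
      (CommensWP.lemA H₁ hfg₁ (CommensWP.wpf_of_weaklyPeriodic hG₁))))
end

section
/- Strong periodicity is a commensurability invariant for finitely generated groups: if G₁ and G₂ are finitely generated commensurable groups and G₁ is strongly periodic, then G₂ is strongly periodic. -/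
section IsoInvariance

variable {G H A : Type*} [Group G] [Group H]

lemma mem_stab_iff {x : G → A} {g : G} : g ∈ stab x ↔ shiftAct g x = x := Iff.rfl

/-- Pull back a pattern along a group isomorphism. -/
def Pattern.comapIso (e : G ≃* H) (p : Pattern H A) : Pattern G A where
  supp := p.supp.map ⟨e.symm, e.symm.injective⟩
  val := fun w => p.val ⟨e ↑w, by
    obtain ⟨v, hv, hve⟩ := Finset.mem_map.1 w.2
    simp only [Function.Embedding.coeFn_mk] at hve
    rw [← hve, MulEquiv.apply_symm_apply]
    exact hv⟩

lemma mem_of_mem_comapIso (e : G ≃* H) (p : Pattern H A) {g : G}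
    (hg : g ∈ (Pattern.comapIso e p).supp) : e g ∈ p.supp := by
  obtain ⟨v, hv, hve⟩ := Finset.mem_map.1 hg
  simp only [Function.Embedding.coeFn_mk] at hve
  rw [← hve, MulEquiv.apply_symm_apply]
  exact hv

lemma appears_comapIso (e : G ≃* H) (p : Pattern H A) (x : H → A) :
    (Pattern.comapIso e p).appears (fun g => x (e g)) ↔ p.appears x := by
  constructor
  · rintro ⟨g, hg⟩
    refine ⟨e g, fun v => ?_⟩
    have hm : e.symm ↑v ∈ (Pattern.comapIso e p).supp :=
      Finset.mem_map_of_mem _ v.2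
    have h1 := hg ⟨e.symm ↑v, hm⟩
    simp only [shiftAct] at h1 ⊢
    rw [show e (g⁻¹ * e.symm ↑v) = (e g)⁻¹ * ↑v by
      rw [map_mul, map_inv, e.apply_symm_apply]] at h1
    rw [h1]
    show p.val ⟨e (e.symm ↑v), _⟩ = p.val v
    congr 1
    exact Subtype.ext (e.apply_symm_apply _)
  · rintro ⟨h, hh⟩
    refine ⟨e.symm h, fun w => ?_⟩
    have h1 := hh ⟨e ↑w, mem_of_mem_comapIso e p w.2⟩
    simp only [shiftAct] at h1 ⊢
    rw [show e ((e.symm h)⁻¹ * ↑w) = h⁻¹ * e ↑w by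
      rw [map_mul, map_inv, e.apply_symm_apply]]
    exact h1

lemma stronglyPeriodic_of_mulEquiv (e : G ≃* H) (hG : StronglyPeriodic G) :
    StronglyPeriodic H := by
  intro A _ P hPfin hne
  obtain ⟨x₀, hx₀⟩ := hne
  have hne' : (avoids ((Pattern.comapIso e) '' P)).Nonempty := by
    refine ⟨fun g => x₀ (e g), ?_⟩
    rintro p' ⟨p, hp, rfl⟩ hap
    exact hx₀ p hp ((appears_comapIso e p x₀).1 hap)
  obtain ⟨z, hz, hzfi⟩ := hG A _ (hPfin.image _) hne'
  have hze : (fun g => z (e.symm (e g))) = z := by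
    funext g; rw [e.symm_apply_apply]
  refine ⟨fun h => z (e.symm h), ?_, ?_⟩
  · intro p hp hap
    refine hz (Pattern.comapIso e p) ⟨p, hp, rfl⟩ ?_
    have h1 := (appears_comapIso e p (fun h => z (e.symm h))).2 hap
    rwa [hze] at h1
  · have hcom : (stab (fun h => z (e.symm h))).comap e.toMonoidHom = stab z := by
      ext g
      simp only [Subgroup.mem_comap]
      rw [mem_stab_iff, mem_stab_iff]
      constructor
      · intro hg
        funext k
        have h1 := congrFun hg (e k)
        simp only [shiftAct, MulEquiv.coe_toMonoidHom] at h1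
        rw [show e.symm ((e g)⁻¹ * e k) = g⁻¹ * k by
          rw [map_mul, map_inv, e.symm_apply_apply, e.symm_apply_apply]] at h1
        rwa [e.symm_apply_apply] at h1
      · intro hg
        funext k
        have h1 := congrFun hg (e.symm k)
        simp only [shiftAct, MulEquiv.coe_toMonoidHom] at h1 ⊢
        rw [show e.symm ((e g)⁻¹ * k) = g⁻¹ * e.symm k by
          rw [map_mul, map_inv, e.symm_apply_apply]]
        exact h1
    have hidx := Subgroup.index_comap_of_surjective
      (H := stab (fun h => z (e.symm h))) (f := e.toMonoidHom) e.surjective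
    rw [hcom] at hidx
    exact ⟨hidx ▸ hzfi.index_ne_zero⟩

end IsoInvariance
section SubgroupStep

variable {G A : Type*} [Group G] {H : Subgroup G}

lemma mem_stab_iff' {x : G → A} {g : G} : g ∈ stab x ↔ shiftAct g x = x := Iff.rfl

/-- The `H`-part of `g` in the left-coset decomposition `g = c · h`. -/
noncomputable def hB (H : Subgroup G) (k : G) : ↥H :=
  ⟨(Quotient.out (QuotientGroup.mk k : G ⧸ H))⁻¹ * k, by
    exact QuotientGroup.eq.mp (QuotientGroup.out_eq' (QuotientGroup.mk k))⟩

lemma hB_mul (H : Subgroup G) (k : G) (w : ↥H) : hB H (k * ↑w) = hB H k * w := by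
  apply Subtype.ext
  show (Quotient.out (QuotientGroup.mk (k * ↑w) : G ⧸ H))⁻¹ * (k * ↑w)
      = (Quotient.out (QuotientGroup.mk k : G ⧸ H))⁻¹ * k * ↑w
  rw [QuotientGroup.mk_mul_of_mem k w.2, mul_assoc]

/-- Push a pattern over `↥H` forward to a pattern over `G`. -/
def pmapG (H : Subgroup G) (p : Pattern ↥H A) : Pattern G A where
  supp := p.supp.map ⟨Subtype.val, Subtype.val_injective⟩
  val := fun w => p.val ⟨⟨↑w, by
      obtain ⟨v, hv, hve⟩ := Finset.mem_map.1 w.2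
      simp only [Function.Embedding.coeFn_mk] at hve
      rw [← hve]; exact v.2⟩, by
      obtain ⟨v, hv, hve⟩ := Finset.mem_map.1 w.2
      simp only [Function.Embedding.coeFn_mk] at hve
      have he : v = (⟨(↑w : G), hve ▸ v.2⟩ : ↥H) := Subtype.ext hve
      exact he ▸ hv⟩

lemma stronglyPeriodic_subgroup {G : Type*} [Group G] (H : Subgroup G)
    (hG : StronglyPeriodic G) : StronglyPeriodic ↥H := by
  intro A _ P hPfin hne
  obtain ⟨y₀, hy₀⟩ := hne
  have hne' : (avoids ((pmapG H) '' P)).Nonempty := by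
    refine ⟨fun k => y₀ (hB H k), ?_⟩
    rintro p' ⟨p, hp, rfl⟩ ⟨g, hg⟩
    apply hy₀ p hp
    refine ⟨(hB H g⁻¹)⁻¹, fun v => ?_⟩
    have hm : (↑↑v : G) ∈ (pmapG H p).supp := Finset.mem_map_of_mem _ v.2
    have h1 := hg ⟨↑↑v, hm⟩
    simp only [shiftAct] at h1 ⊢
    rw [inv_inv, ← hB_mul H g⁻¹ ↑v]
    exact h1
  obtain ⟨z, hz, hzfi⟩ := hG A _ (hPfin.image _) hne'
  refine ⟨fun v => z ↑v, ?_, ?_⟩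
  · rintro p hp ⟨h, hh⟩
    refine hz (pmapG H p) ⟨p, hp, rfl⟩ ⟨↑h, fun w => ?_⟩
    have h1 := hh ⟨⟨↑w, by
        obtain ⟨v, hv, hve⟩ := Finset.mem_map.1 w.2
        simp only [Function.Embedding.coeFn_mk] at hve
        rw [← hve]; exact v.2⟩, by
        obtain ⟨v, hv, hve⟩ := Finset.mem_map.1 w.2
        simp only [Function.Embedding.coeFn_mk] at hve
        have he : v = (⟨(↑w : G), hve ▸ v.2⟩ : ↥H) := Subtype.ext hve
        exact he ▸ hv⟩
    simp only [shiftAct] at h1 ⊢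
    exact h1
  · have hle : (stab z).subgroupOf H ≤ stab (fun v : ↥H => z ↑v) := by
      intro h hh
      rw [Subgroup.mem_subgroupOf] at hh
      rw [mem_stab_iff'] at hh ⊢
      funext v
      have h1 := congrFun hh (↑v : G)
      simp only [shiftAct] at h1 ⊢
      exact h1
    haveI := hzfi
    haveI : ((stab z).subgroupOf H).FiniteIndex := inferInstance
    exact Subgroup.finiteIndex_of_le hle

end SubgroupStep
section UpStep

variable {G : Type*} [Group G]

/-- The coset coordinate of `g` for the decomposition `g = h · t`, `h ∈ H`. -/
def cpart (H : Subgroup G) (g : G) : G ⧸ H := QuotientGroup.mk g⁻¹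

/-- A transversal section `G ⧸ H → G`. -/
noncomputable def tauC (H : Subgroup G) (c : G ⧸ H) : G := (Quotient.out c)⁻¹

/-- The `H`-part of `g` in the decomposition `g = h · t`. -/
noncomputable def hpart (H : Subgroup G) (g : G) : ↥H :=
  ⟨g * Quotient.out (QuotientGroup.mk g⁻¹ : G ⧸ H), by
    have h1 := QuotientGroup.eq.mp
      (QuotientGroup.out_eq' (QuotientGroup.mk g⁻¹ : G ⧸ H)).symm
    simpa using h1⟩

lemma hpart_tauC_cpart (H : Subgroup G) (g : G) :
    ↑(hpart H g) * tauC H (cpart H g) = g := by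
  show (g * Quotient.out (QuotientGroup.mk g⁻¹ : G ⧸ H)) *
      (Quotient.out (QuotientGroup.mk g⁻¹ : G ⧸ H))⁻¹ = g
  rw [mul_inv_cancel_right]

lemma cpart_mul (H : Subgroup G) (h : ↥H) (g : G) : cpart H (↑h * g) = cpart H g := by
  show QuotientGroup.mk ((↑h * g)⁻¹) = QuotientGroup.mk (g⁻¹ : G)
  rw [mul_inv_rev]
  exact QuotientGroup.mk_mul_of_mem g⁻¹ (H.inv_mem h.2)

lemma hpart_mul (H : Subgroup G) (h : ↥H) (g : G) :
    hpart H (↑h * g) = h * hpart H g := by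
  apply Subtype.ext
  show (↑h * g) * Quotient.out (QuotientGroup.mk (↑h * g)⁻¹ : G ⧸ H)
      = ↑h * (g * Quotient.out (QuotientGroup.mk g⁻¹ : G ⧸ H))
  have : (QuotientGroup.mk (↑h * g)⁻¹ : G ⧸ H) = QuotientGroup.mk g⁻¹ := by
    rw [mul_inv_rev]
    exact QuotientGroup.mk_mul_of_mem g⁻¹ (H.inv_mem h.2)
  rw [this, mul_assoc]

lemma stronglyPeriodic_of_finiteIndex_subgroup {G : Type*} [Group G] (H : Subgroup G)
    (hfi : H.FiniteIndex) (hH : StronglyPeriodic ↥H) : StronglyPeriodic G := by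
  classical
  intro A _ P hPfin hne
  obtain ⟨x₀, hx₀⟩ := hne
  haveI := hfi
  haveI : Finite (G ⧸ H) := H.finite_quotient_of_finiteIndex
  obtain ⟨n, ⟨ε⟩⟩ := Finite.exists_equiv_fin (G ⧸ H)
  -- encode configurations over G as configurations over H with alphabet B
  let B : Type := Fin n → A
  let code : (G → A) → (↥H → B) := fun x h i => x (↑h * tauC H (ε.symm i))
  let decode : (↥H → B) → (G → A) := fun z g => z (hpart H g) (ε (cpart H g))
  have hdc : ∀ (z : ↥H → B) (h : ↥H) (i : Fin n), code (decode z) h i = z h i := by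
    intro z h i
    show z (hpart H (↑h * tauC H (ε.symm i))) (ε (cpart H (↑h * tauC H (ε.symm i)))) = z h i
    rw [hpart_mul, cpart_mul]
    have h1 : hpart H (tauC H (ε.symm i)) = 1 := by
      apply Subtype.ext
      show tauC H (ε.symm i) * Quotient.out (QuotientGroup.mk (tauC H (ε.symm i))⁻¹ : G ⧸ H)
          = (1 : G)
      show (Quotient.out (ε.symm i))⁻¹ *
          Quotient.out (QuotientGroup.mk ((Quotient.out (ε.symm i))⁻¹)⁻¹ : G ⧸ H) = (1 : G)
      rw [inv_inv, QuotientGroup.out_eq', inv_mul_cancel]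
    have h2 : cpart H (tauC H (ε.symm i)) = ε.symm i := by
      show QuotientGroup.mk (tauC H (ε.symm i))⁻¹ = ε.symm i
      show QuotientGroup.mk ((Quotient.out (ε.symm i))⁻¹)⁻¹ = ε.symm i
      rw [inv_inv, QuotientGroup.out_eq']
    rw [h1, h2, mul_one, Equiv.apply_symm_apply]
  have hdecode_code : ∀ (x : G → A) (g : G), decode (code x) g = x g := by
    intro x g
    show x (↑(hpart H g) * tauC H (ε.symm (ε (cpart H g)))) = x g
    rw [Equiv.symm_apply_apply, hpart_tauC_cpart]
  -- the forbidden pattern set over H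
  let suppQ : Pattern G A → (G ⧸ H) → Finset ↥H := fun p c =>
    p.supp.image (fun s => hpart H (tauC H c * s))
  let Q : Set (Pattern ↥H B) :=
    {q | ∃ p ∈ P, ∃ c : G ⧸ H, ∃ hs : q.supp = suppQ p c,
      ∀ s : p.supp, q.val ⟨hpart H (tauC H c * ↑s), by
          rw [hs]; exact Finset.mem_image_of_mem _ s.2⟩
        (ε (cpart H (tauC H c * ↑s))) = p.val s}
  have hQfin : Q.Finite := by
    have hsub : Q ⊆ ⋃ p ∈ P, ⋃ c : G ⧸ H, {q : Pattern ↥H B | q.supp = suppQ p c} := by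
      rintro q ⟨p, hp, c, hs, -⟩
      exact Set.mem_biUnion hp (Set.mem_iUnion.2 ⟨c, hs⟩)
    refine Set.Finite.subset ?_ hsub
    refine Set.Finite.biUnion hPfin fun p _ => ?_
    refine Set.finite_iUnion fun c => ?_
    have hsub2 : {q : Pattern ↥H B | q.supp = suppQ p c} ⊆
        (fun v : ((suppQ p c : Finset ↥H) : Type _) → B => Pattern.mk (suppQ p c) v) ''
          Set.univ := by
      rintro ⟨s, v⟩ hq
      simp only [Set.mem_setOf_eq] at hq
      subst hq
      exact ⟨v, Set.mem_univ _, rfl⟩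
    exact Set.Finite.subset (Set.finite_univ.image _) hsub2
  -- code x₀ avoids Q
  have hcode_avoids : ∀ x : G → A, x ∈ avoids P → code x ∈ avoids Q := by
    rintro x hx q ⟨p, hp, c, hs, hcompat⟩ ⟨h', hq⟩
    apply hx p hp
    refine ⟨(↑h'⁻¹ * tauC H c)⁻¹, fun s => ?_⟩
    have hw : hpart H (tauC H c * ↑s) ∈ q.supp := by
      rw [hs]; exact Finset.mem_image_of_mem _ s.2
    have h1 := congrFun (hq ⟨hpart H (tauC H c * ↑s), hw⟩) (ε (cpart H (tauC H c * ↑s)))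
    rw [hcompat s] at h1
    simp only [shiftAct] at h1 ⊢
    rw [inv_inv, mul_assoc]
    rw [← h1]
    have hx2 : code x (h'⁻¹ * hpart H (tauC H c * ↑s)) (ε (cpart H (tauC H c * ↑s)))
        = x (↑h'⁻¹ * (tauC H c * ↑s)) := by
      show x (↑(h'⁻¹ * hpart H (tauC H c * ↑s)) *
          tauC H (ε.symm (ε (cpart H (tauC H c * ↑s))))) = x (↑h'⁻¹ * (tauC H c * ↑s))
      rw [Equiv.symm_apply_apply]
      congr 1
      push_cast
      rw [mul_assoc, hpart_tauC_cpart]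
    exact hx2.symm
  obtain ⟨z, hz, hzfi⟩ := hH B Q hQfin ⟨code x₀, hcode_avoids x₀ hx₀⟩
  refine ⟨decode z, ?_, ?_⟩
  · rintro p hp ⟨g, hg⟩
    refine hz (Pattern.mk (suppQ p (cpart H g⁻¹)) (fun w => z (hpart H g⁻¹ * ↑w)))
      ⟨p, hp, cpart H g⁻¹, rfl, fun s => ?_⟩
      ⟨(hpart H g⁻¹)⁻¹, fun w => ?_⟩
    · -- compatibility
      have h2 := hg s
      simp only [shiftAct] at h2
      show z (hpart H g⁻¹ * hpart H (tauC H (cpart H g⁻¹) * ↑s))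
          (ε (cpart H (tauC H (cpart H g⁻¹) * ↑s))) = p.val s
      rw [show (g⁻¹ * ↑s : G) = ↑(hpart H g⁻¹) * (tauC H (cpart H g⁻¹) * ↑s) by
        rw [← mul_assoc, hpart_tauC_cpart]] at h2
      rw [← h2]
      show z (hpart H g⁻¹ * hpart H (tauC H (cpart H g⁻¹) * ↑s))
          (ε (cpart H (tauC H (cpart H g⁻¹) * ↑s)))
        = z (hpart H (↑(hpart H g⁻¹) * (tauC H (cpart H g⁻¹) * ↑s)))
          (ε (cpart H (↑(hpart H g⁻¹) * (tauC H (cpart H g⁻¹) * ↑s))))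
      rw [hpart_mul, cpart_mul]
    · -- the pattern appears in z
      show z ((hpart H g⁻¹)⁻¹⁻¹ * ↑w) = z (hpart H g⁻¹ * ↑w)
      rw [inv_inv]
  · -- finite index stabilizer
    have hle : (stab z).map H.subtype ≤ stab (decode z) := by
      rintro g ⟨h, hh, rfl⟩
      replace hh : shiftAct h z = z := hh
      show shiftAct (H.subtype h) (decode z) = decode z
      funext k
      show z (hpart H ((H.subtype h)⁻¹ * k)) (ε (cpart H ((H.subtype h)⁻¹ * k)))
          = z (hpart H k) (ε (cpart H k))
      rw [show ((H.subtype h)⁻¹ * k : G) = ↑h⁻¹ * k from rfl, hpart_mul, cpart_mul]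
      have h1 := congrFun hh (hpart H k)
      exact congrFun h1 _
    haveI hKfi : ((stab z).map H.subtype).FiniteIndex := by
      refine ⟨fun h0 => ?_⟩
      have h1 : ((stab z).map H.subtype).subgroupOf H = stab z :=
        Subgroup.comap_map_eq_self_of_injective H.subtype_injective _
      have h2 := Subgroup.relIndex_mul_index (Subgroup.map_subtype_le (stab z))
      have h3 : ((stab z).map H.subtype).relIndex H = (stab z).index := by
        show (((stab z).map H.subtype).subgroupOf H).index = _
        rw [h1]
      rw [h3, h0] at h2
      exact Nat.mul_ne_zero hzfi.index_ne_zero hfi.index_ne_zero h2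
    exact Subgroup.finiteIndex_of_le hle

end UpStep

/-- Strong periodicity is a commensurability invariant for finitely
generated groups. -/
theorem strongly_periodic_commensurability_invariant {G₁ G₂ : Type*} [Group G₁] [Group G₂]
    (hfg₁ : Group.FG G₁) (hfg₂ : Group.FG G₂)
    (H₁ : Subgroup G₁) (H₂ : Subgroup G₂) (h₁ : H₁.FiniteIndex) (h₂ : H₂.FiniteIndex)
    (iso : Nonempty (H₁ ≃* H₂)) (hG₁ : StronglyPeriodic G₁) : StronglyPeriodic G₂ := by
  obtain ⟨e⟩ := iso
  exact stronglyPeriodic_of_finiteIndex_subgroup H₂ h₂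
    (stronglyPeriodic_of_mulEquiv e (stronglyPeriodic_subgroup H₁ hG₁))
end

section
/- Let f : G → Q be a surjective group homomorphism with kernel N and F : A^Q → A^G the induced map F(x) = x ∘ f. Let S̄ ⊂ A^Q be an SFT defined by forbidden patterns P̄ ⊂ A^Ω̄ for a finite Ω̄ ⊂ Q, choose a finite Ω ⊂ G mapped bijectively onto Ω̄ by f, and let S ⊂ A^G be the SFT defined by the corresponding transported forbidden patterns P = {p̄ ∘ (f|_Ω) : p̄ ∈ P̄}. Then F(S̄) = S ∩ Fix(N). -/
/-- Transporting an SFT along a surjection. If `S̄ ⊆ A^Q` is the SFT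
defined by forbidden patterns `P̄` all supported on `Ω̄`, `Ω ⊆ G` maps bijectively
onto `Ω̄` under `f`, and `P` consists of the patterns `p̄ ∘ f|_Ω` for `p̄ ∈ P̄`,
then `F(S̄) = S ∩ Fix(ker f)`, where `S = avoids P` and `F(x) = x ∘ f`. -/
theorem transported_SFT_eq_fix_inter {G Q A : Type*} [Group G] [Group Q] [Finite A]
    [DecidableEq Q]
    (f : G →* Q) (hf : Function.Surjective f)
    (Ωbar : Finset Q) (Pbar : Set (Pattern Q A)) (hPbar : Pbar.Finite)
    (hsupp : ∀ p ∈ Pbar, p.supp = Ωbar)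
    (Ω : Finset G) (hΩ : Ω.image f = Ωbar) (hinj : Set.InjOn f (Ω : Set G)) :
    (fun (x : Q → A) => x ∘ f) '' (avoids Pbar) =
      avoids {p : Pattern G A | p.supp = Ω ∧ ∃ pbar ∈ Pbar,
          ∀ (w : G) (hw : w ∈ p.supp) (hw' : f w ∈ pbar.supp),
            p.val ⟨w, hw⟩ = pbar.val ⟨f w, hw'⟩} ∩
        {y : G → A | ∀ n ∈ f.ker, shiftAct n y = y} := by
  ext y
  constructor
  · rintro ⟨x, hx, rfl⟩
    constructor
    · rintro p ⟨hps, pbar, hpbar, hval⟩ ⟨g, hg⟩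
      apply hx pbar hpbar
      refine ⟨f g, ?_⟩
      rintro ⟨wbar, hwbar⟩
      have hmem : wbar ∈ Ω.image f := by
        rw [hΩ, ← hsupp pbar hpbar]; exact hwbar
      obtain ⟨w, hw, rfl⟩ := Finset.mem_image.mp hmem
      have hw' : w ∈ p.supp := hps ▸ hw
      have h1 := hg ⟨w, hw'⟩
      simp only [shiftAct, Function.comp] at h1 ⊢
      rw [← map_inv, ← map_mul]
      rw [h1, hval w hw' hwbar]
    · intro n hn
      funext k
      simp [shiftAct, map_mul, map_inv, MonoidHom.mem_ker.mp hn]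
  · rintro ⟨hy, hfix⟩
    set s := Function.surjInv hf with hsdef
    have hs : ∀ q, f (s q) = q := Function.surjInv_eq hf
    have key : ∀ g, y (s (f g)) = y g := by
      intro g
      have hn : g * (s (f g))⁻¹ ∈ f.ker := by
        simp [MonoidHom.mem_ker, hs]
      have h := congrFun (hfix _ hn) g
      simpa [shiftAct, mul_assoc] using h
    refine ⟨y ∘ s, ?_, funext fun g => key g⟩
    rintro pbar hpbar ⟨q, hq⟩
    obtain ⟨g, rfl⟩ := hf q
    have hmem : ∀ w : {w // w ∈ Ω}, f w.1 ∈ pbar.supp := by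
      intro w
      rw [hsupp pbar hpbar, ← hΩ]
      exact Finset.mem_image_of_mem f w.2
    refine hy ⟨Ω, fun w => pbar.val ⟨f w.1, hmem w⟩⟩
      ⟨rfl, pbar, hpbar, fun w hw hw' => rfl⟩ ⟨g, ?_⟩
    rintro ⟨w, hw⟩
    have h2 := hq ⟨f w, hmem ⟨w, hw⟩⟩
    simp only [shiftAct, Function.comp] at h2 ⊢
    rw [← map_inv, ← map_mul] at h2
    rw [← key (g⁻¹ * w)]
    exact h2
end

section
/- Suppose 1 → N → G → Q → 1 is a short exact sequence of groups with N finitely generated. If G is strongly periodic, then Q is strongly periodic. -/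
/-- Pull back a pattern over `Q` to a pattern over `G` along a section `σ` of `f`. -/
def pullPattern {G Q A : Type*} [Group G] [Group Q] [DecidableEq G] (f : G →* Q) (σ : Q → G)
    (hσ : ∀ q, f (σ q) = q) (p : Pattern Q A) : Pattern G A :=
  ⟨p.supp.image σ, fun w => p.val ⟨f w.1, by
    obtain ⟨u, hu, huw⟩ := Finset.mem_image.mp w.2
    rw [← huw, hσ]; exact hu⟩⟩

theorem pullPattern_appears {G Q A : Type*} [Group G] [Group Q] [DecidableEq G] (f : G →* Q) (σ : Q → G)
    (hσ : ∀ q, f (σ q) = q) (p : Pattern Q A) (y : Q → A) :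
    (pullPattern f σ hσ p).appears (fun g => y (f g)) ↔ p.appears y := by
  constructor
  · rintro ⟨g, hg⟩
    refine ⟨f g, ?_⟩
    intro u
    have hmem : σ u.1 ∈ (pullPattern f σ hσ p).supp :=
      Finset.mem_image_of_mem σ u.2
    have h := hg ⟨σ u.1, hmem⟩
    have hval : (pullPattern f σ hσ p).val ⟨σ u.1, hmem⟩ = p.val u := by
      show p.val ⟨f (σ u.1), _⟩ = p.val u
      congr 1
      exact Subtype.ext (hσ u.1)
    show y ((f g)⁻¹ * u.1) = p.val u
    have : y (f (g⁻¹ * σ u.1)) = (pullPattern f σ hσ p).val ⟨σ u.1, hmem⟩ := h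
    rw [map_mul, map_inv, hσ] at this
    rw [this, hval]
  · rintro ⟨q, hq⟩
    refine ⟨σ q, ?_⟩
    rintro ⟨w, hw⟩
    obtain ⟨u, hu, huw⟩ := Finset.mem_image.mp hw
    have h := hq ⟨u, hu⟩
    show y (f ((σ q)⁻¹ * w)) = p.val ⟨f w, _⟩
    have hfw : f w = u := by rw [← huw, hσ]
    have hval : p.val ⟨f w, by rw [hfw]; exact hu⟩ = p.val ⟨u, hu⟩ := by
      congr 1
      exact Subtype.ext hfw
    rw [map_mul, map_inv, hσ, hval, hfw]
    exact h

/-- If `1 → N → G → Q → 1` is exact (i.e. `f : G → Q` is surjective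
with kernel `N`), `N` is finitely generated, and `G` is strongly periodic, then `Q`
is strongly periodic. -/
theorem strongly_periodic_quotient {G Q : Type*} [Group G] [Group Q]
    (f : G →* Q) (hf : Function.Surjective f) (hN : f.ker.FG)
    (hG : StronglyPeriodic G) : StronglyPeriodic Q := by
  intro A _ P hP hne
  haveI := Classical.decEq G
  -- generators of the kernel
  obtain ⟨T, hT⟩ := hN
  -- a section of f
  set σ : Q → G := Function.surjInv hf with hσdef
  have hσ : ∀ q, f (σ q) = q := fun q => Function.surjInv_eq hf q
  -- the support for the invariance patterns
  set S₀ : Finset G := insert 1 T with hS₀def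
  have h1S : (1 : G) ∈ S₀ := Finset.mem_insert_self 1 T
  have hSker : ∀ s ∈ S₀, s ∈ f.ker := by
    intro s hs
    rcases Finset.mem_insert.mp hs with h | h
    · subst h; exact one_mem _
    · rw [← hT]; exact Subgroup.subset_closure h
  -- invariance patterns
  set Pinv : Set (Pattern G A) :=
    {p | ∃ v : {g // g ∈ S₀} → A, p = ⟨S₀, v⟩ ∧
      ∃ s, ∃ hs : s ∈ S₀, v ⟨s, hs⟩ ≠ v ⟨1, h1S⟩} with hPinvdef
  have hPinvFin : Pinv.Finite := by
    apply Set.Finite.subset (Set.finite_range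
      (fun v : ({g // g ∈ S₀} → A) => (⟨S₀, v⟩ : Pattern G A)))
    rintro p ⟨v, rfl, -⟩
    exact ⟨v, rfl⟩
  -- the full set of forbidden patterns over G
  set P' : Set (Pattern G A) := (pullPattern f σ hσ '' P) ∪ Pinv with hP'def
  have hP'Fin : P'.Finite := (hP.image _).union hPinvFin
  -- a configuration avoiding Pinv factors through f
  have hinv : ∀ x : G → A, x ∈ avoids Pinv → ∀ g g', f g = f g' → x g = x g' := by
    intro x hx
    have step : ∀ (k : G), ∀ s ∈ S₀, x (k * s) = x k := by
      intro k s hs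
      by_contra hne'
      refine hx ⟨S₀, fun w => x (k * w.1)⟩ ⟨fun w => x (k * w.1), rfl, s, hs, ?_⟩
        ⟨k⁻¹, ?_⟩
      · simpa using hne'
      · intro w
        show x (k⁻¹⁻¹ * w.1) = x (k * w.1)
        rw [inv_inv]
    let H : Subgroup G :=
      { carrier := {n | ∀ k, x (k * n) = x k}
        one_mem' := by intro k; rw [mul_one]
        mul_mem' := by
          intro a b ha hb k
          rw [← mul_assoc, hb (k * a), ha k]
        inv_mem' := by
          intro a ha k
          have := ha (k * a⁻¹)
          rw [mul_assoc, inv_mul_cancel, mul_one] at this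
          exact this.symm }
    have hTH : (T : Set G) ⊆ H := fun s hs k =>
      step k s (Finset.mem_insert_of_mem hs)
    have hkerH : f.ker ≤ H := by
      rw [← hT]
      exact (Subgroup.closure_le H).mpr hTH
    intro g g' hgg'
    have hk : g⁻¹ * g' ∈ f.ker := by
      rw [MonoidHom.mem_ker, map_mul, map_inv, hgg', inv_mul_cancel]
    have := hkerH hk g
    rw [mul_inv_cancel_left] at this
    exact this.symm
  have hyfPinv : ∀ y : Q → A, (fun g => y (f g)) ∈ avoids Pinv := by
    intro y p hp hap
    obtain ⟨v, rfl, s, hs, hbad⟩ := hp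
    obtain ⟨g, hg⟩ := hap
    have h₁ : y (f (g⁻¹ * s)) = v ⟨s, hs⟩ := hg ⟨s, hs⟩
    have h₂ : y (f (g⁻¹ * 1)) = v ⟨1, h1S⟩ := hg ⟨1, h1S⟩
    apply hbad
    rw [← h₁, ← h₂, map_mul, map_mul, hSker s hs, map_one]
  -- avoids P' is nonempty
  obtain ⟨y₀, hy₀⟩ := hne
  have hx₀ : (fun g => y₀ (f g)) ∈ avoids P' := by
    intro p hp hap
    rcases hp with ⟨q, hq, rfl⟩ | hp
    · exact hy₀ q hq ((pullPattern_appears f σ hσ q y₀).mp hap)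
    · exact hyfPinv y₀ p hp hap
  -- apply strong periodicity of G
  obtain ⟨x, hx, hidx⟩ := hG A P' hP'Fin ⟨_, hx₀⟩
  have hxPinv : x ∈ avoids Pinv := fun p hp => hx p (Or.inr hp)
  have hfac := hinv x hxPinv
  -- x factors through f
  set y : Q → A := fun q => x (σ q) with hydef
  have hxy : x = fun g => y (f g) := by
    funext g
    show x g = x (σ (f g))
    exact (hfac (σ (f g)) g (hσ (f g))).symm
  refine ⟨y, ?_, ?_⟩
  · intro p hp hap
    have : (pullPattern f σ hσ p).appears x := by
      rw [hxy]
      exact (pullPattern_appears f σ hσ p y).mpr hap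
    exact hx _ (Or.inl ⟨p, hp, rfl⟩) this
  · -- finite index of stab y
    have hmap : (stab x).map f ≤ stab y := by
      rintro _ ⟨g, hg, rfl⟩
      show shiftAct (f g) y = y
      funext q
      show y ((f g)⁻¹ * q) = y q
      have e1 : x (σ ((f g)⁻¹ * q)) = x (g⁻¹ * σ q) := by
        apply hfac
        rw [hσ, map_mul, map_inv, hσ]
      have e2 : x (g⁻¹ * σ q) = x (σ q) := congrFun hg (σ q)
      exact e1.trans e2
    have hdvd₁ : (stab y).index ∣ ((stab x).map f).index :=
      Subgroup.index_dvd_of_le hmap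
    have hdvd₂ : ((stab x).map f).index ∣ (stab x).index :=
      Subgroup.index_map_dvd _ hf
    exact ⟨fun h => hidx.index_ne_zero (Nat.eq_zero_of_zero_dvd (h ▸ hdvd₁.trans hdvd₂))⟩
end
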